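/- arXiv:1406.0719 — 6 statements merged into one kernel-verified Lean document; each statement's English description precedes it below -/
import Mathlib

section
/- For all n ≥ 1 the polynomials R_n and Q_n are self-inversive: z^n·conj(R_n(1/conj(z))) = R_n(z) and z^{n-1}·conj(Q_n(1/conj(z))) = Q_n(z); equivalently, writing R_n(z) = Σ_{j=0}^n r_{n,j} z^j and Q_n(z) = Σ_{j=0}^{n-1} q_{n,j} z^j, one has conj(r_{n,j}) = r_{n,n-j} for 0 ≤ j ≤ n and conj(q_{n,j}) = q_{n,n-1-j} for 0 ≤ j ≤ n-1. Moreover r_{n,n} = conj(r_{n,0}) = ∏_{k=1}^n (1 + i c_k) for n ≥ 1, and q_{n,n-1} = conj(q_{n,0}) = 2 d_1 ∏_{k=2}^n (1 + i c_k) for n ≥ 2. -/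
open Polynomial MeasureTheory Finset
open scoped ComplexConjugate

/-- The polynomials `R_n` defined by the three term recurrence
`R_{n+1}(z) = [(1+i c_{n+1}) z + (1-i c_{n+1})] R_n(z) - 4 d_{n+1} z R_{n-1}(z)`. -/
noncomputable def Rpoly (c d : ℕ → ℝ) : ℕ → Polynomial ℂ
  | 0 => 1
  | 1 => C (1 + Complex.I * (c 1 : ℂ)) * X + C (1 - Complex.I * (c 1 : ℂ))
  | (n + 2) =>
      (C (1 + Complex.I * (c (n + 2) : ℂ)) * X + C (1 - Complex.I * (c (n + 2) : ℂ))) *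
          Rpoly c d (n + 1)
        - C (4 * (d (n + 2) : ℂ)) * X * Rpoly c d n

/-- The polynomials `Q_n` satisfying the same recurrence with `Q_0 = 0`, `Q_1 = 2 d_1`. -/
noncomputable def Qpoly (c d : ℕ → ℝ) : ℕ → Polynomial ℂ
  | 0 => 0
  | 1 => C (2 * (d 1 : ℂ))
  | (n + 2) =>
      (C (1 + Complex.I * (c (n + 2) : ℂ)) * X + C (1 - Complex.I * (c (n + 2) : ℂ))) *
          Qpoly c d (n + 1)
        - C (4 * (d (n + 2) : ℂ)) * X * Qpoly c d n

/-- Evaluation of the reflected polynomial. -/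
lemma eval_reflect' (N : ℕ) (p : Polynomial ℂ) (hp : p.natDegree ≤ N) (z : ℂ) (hz : z ≠ 0) :
    (reflect N p).eval z = z ^ N * p.eval z⁻¹ := by
  letI : Invertible (z⁻¹) := invertibleOfNonzero (inv_ne_zero hz)
  have h0 := eval₂_reflect_mul_pow (RingHom.id ℂ) (z⁻¹) N p hp
  rw [invOf_eq_inv, inv_inv] at h0
  have h : (reflect N p).eval z * z⁻¹ ^ N = p.eval z⁻¹ := h0
  have key : ((z : ℂ)⁻¹) ^ N * z ^ N = 1 := by
    rw [← mul_pow, inv_mul_cancel₀ hz, one_pow]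
  calc (reflect N p).eval z = (reflect N p).eval z * (((z : ℂ)⁻¹) ^ N * z ^ N) := by
        rw [key, mul_one]
    _ = ((reflect N p).eval z * (z⁻¹) ^ N) * z ^ N := by ring
    _ = z ^ N * p.eval z⁻¹ := by rw [h]; ring

lemma stepL (x : ℝ) (M : ℕ) (p : Polynomial ℂ) (hp : p.natDegree ≤ M)
    (hp' : reflect M (p.map (starRingEnd ℂ)) = p) :
    reflect (M + 1)
        (((C (1 + Complex.I * (x : ℂ)) * X + C (1 - Complex.I * (x : ℂ))) * p).map
          (starRingEnd ℂ)) =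
      (C (1 + Complex.I * (x : ℂ)) * X + C (1 - Complex.I * (x : ℂ))) * p := by
  have ha : (starRingEnd ℂ) (1 + Complex.I * (x : ℂ)) = 1 - Complex.I * (x : ℂ) := by
    simp [Complex.ext_iff]
  have hb : (starRingEnd ℂ) (1 - Complex.I * (x : ℂ)) = 1 + Complex.I * (x : ℂ) := by
    simp [Complex.ext_iff]
  have hmap :
      ((C (1 + Complex.I * (x : ℂ)) * X + C (1 - Complex.I * (x : ℂ))) * p).map
          (starRingEnd ℂ) =
        (C (1 - Complex.I * (x : ℂ)) * X + C (1 + Complex.I * (x : ℂ))) *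
          p.map (starRingEnd ℂ) := by
    simp only [Polynomial.map_mul, Polynomial.map_add, map_C, map_X, ha, hb]
  rw [hmap, show M + 1 = 1 + M from by omega,
    reflect_mul _ _ natDegree_linear_le (natDegree_map_le.trans hp), hp']
  congr 1
  have h1 : (C (1 - Complex.I * (x : ℂ)) * X + C (1 + Complex.I * (x : ℂ)))
      = C (1 - Complex.I * (x : ℂ)) * X ^ 1 + C (1 + Complex.I * (x : ℂ)) * X ^ 0 := by
    ring
  rw [h1, reflect_add, reflect_C_mul_X_pow, reflect_C_mul_X_pow,
    revAt_le (by norm_num), revAt_le (by norm_num)]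
  ring

lemma stepM (m : ℂ) (hm : (starRingEnd ℂ) m = m) (K : ℕ) (q : Polynomial ℂ)
    (hq : q.natDegree ≤ K) (hq' : reflect K (q.map (starRingEnd ℂ)) = q) :
    reflect (K + 2) ((C m * X * q).map (starRingEnd ℂ)) = C m * X * q := by
  have hmap : (C m * X * q).map (starRingEnd ℂ) = C m * X * q.map (starRingEnd ℂ) := by
    simp [Polynomial.map_mul, hm]
  have hdeg : (C m * X).natDegree ≤ 2 := by
    refine (natDegree_mul_le).trans ?_
    simp
  rw [hmap, show K + 2 = 2 + K from by omega,
    reflect_mul _ _ hdeg (natDegree_map_le.trans hq), hq']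
  congr 1
  have h1 : C m * X = C m * X ^ 1 := by ring
  rw [h1, reflect_C_mul_X_pow, revAt_le (by norm_num)]

/-- The key invariant: degree bounds, self-inversiveness as a `reflect` identity,
and leading coefficients. -/
lemma RQkey (c d : ℕ → ℝ) : ∀ n : ℕ,
    ((Rpoly c d n).natDegree ≤ n ∧
      reflect n ((Rpoly c d n).map (starRingEnd ℂ)) = Rpoly c d n ∧
      (Rpoly c d n).coeff n = ∏ k ∈ Finset.Icc 1 n, (1 + Complex.I * (c k : ℂ))) ∧
    ((Qpoly c d n).natDegree ≤ n - 1 ∧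
      reflect (n - 1) ((Qpoly c d n).map (starRingEnd ℂ)) = Qpoly c d n ∧
      (1 ≤ n → (Qpoly c d n).coeff (n - 1) =
        2 * (d 1 : ℂ) * ∏ k ∈ Finset.Icc 2 n, (1 + Complex.I * (c k : ℂ)))) := by
  intro n
  induction n using Nat.twoStepInduction with
  | zero =>
      refine ⟨⟨?_, ?_, ?_⟩, ?_, ?_, ?_⟩ <;> simp [Rpoly, Qpoly]
  | one =>
      constructor
      · refine ⟨natDegree_linear_le, ?_, ?_⟩
        · have := stepL (c 1) 0 1 (by simp) (by simp)
          simpa [Rpoly] using this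
        · simp [Rpoly, coeff_one]
      · refine ⟨?_, ?_, ?_⟩
        · rw [show Qpoly c d 1 = C (2 * (d 1 : ℂ)) from rfl, natDegree_C]
        · simp [Qpoly, Complex.ext_iff]
        · intro _
          simp [Qpoly, Finset.Icc_eq_empty (by omega : ¬ (2:ℕ) ≤ 1)]
  | more n IH IH1 =>
      obtain ⟨⟨hRd, hRr, hRc⟩, hQd, hQr, hQc⟩ := IH
      obtain ⟨⟨hRd1, hRr1, hRc1⟩, hQd1, hQr1, hQc1⟩ := IH1
      have hRdef : Rpoly c d (n + 2) =
          (C (1 + Complex.I * (c (n + 2) : ℂ)) * X + C (1 - Complex.I * (c (n + 2) : ℂ))) *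
            Rpoly c d (n + 1) - C (4 * (d (n + 2) : ℂ)) * X * Rpoly c d n := rfl
      have hQdef : Qpoly c d (n + 2) =
          (C (1 + Complex.I * (c (n + 2) : ℂ)) * X + C (1 - Complex.I * (c (n + 2) : ℂ))) *
            Qpoly c d (n + 1) - C (4 * (d (n + 2) : ℂ)) * X * Qpoly c d n := rfl
      have hm : (starRingEnd ℂ) (4 * (d (n + 2) : ℂ)) = 4 * (d (n + 2) : ℂ) := by
        simp [Complex.ext_iff]
      -- coefficient helper
      have coeff_top : ∀ (p q : Polynomial ℂ) (N : ℕ), p.natDegree ≤ N + 1 → q.natDegree ≤ N →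
          ((C (1 + Complex.I * (c (n + 2) : ℂ)) * X + C (1 - Complex.I * (c (n + 2) : ℂ))) * p
            - C (4 * (d (n + 2) : ℂ)) * X * q).coeff (N + 2) =
          (1 + Complex.I * (c (n + 2) : ℂ)) * p.coeff (N + 1) := by
        intro p q N hp hq
        have hp2 : p.coeff (N + 2) = 0 :=
          coeff_eq_zero_of_natDegree_lt (lt_of_le_of_lt hp (by omega))
        have hq2 : q.coeff (N + 1) = 0 :=
          coeff_eq_zero_of_natDegree_lt (lt_of_le_of_lt hq (by omega))
        rw [coeff_sub, add_mul, coeff_add, mul_assoc, coeff_C_mul, coeff_X_mul,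
          coeff_C_mul, mul_assoc, coeff_C_mul, coeff_X_mul, hp2, hq2]
        ring
      constructor
      · refine ⟨?_, ?_, ?_⟩
        · rw [hRdef]
          refine (natDegree_sub_le _ _).trans (max_le ?_ ?_)
          · refine natDegree_mul_le.trans ?_
            have h1 := natDegree_linear_le (a := 1 + Complex.I * (c (n + 2) : ℂ))
              (b := 1 - Complex.I * (c (n + 2) : ℂ))
            omega
          · refine natDegree_mul_le.trans ?_
            have h1 : (C (4 * (d (n + 2) : ℂ)) * X).natDegree ≤ 1 :=
              natDegree_mul_le.trans (by simp only [natDegree_C, natDegree_X]; omega)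
            omega
        · rw [hRdef, Polynomial.map_sub, reflect_sub,
            stepL (c (n + 2)) (n + 1) _ hRd1 hRr1, stepM _ hm n _ hRd hRr]
        · rw [hRdef, coeff_top _ _ n hRd1 hRd, hRc1,
            Finset.prod_Icc_succ_top (by omega : 1 ≤ n + 2)]
          ring
      · rcases n with _ | m
        · -- n = 0 : Q₂ = L · Q₁
          have h2 : Qpoly c d 2 =
              (C (1 + Complex.I * (c 2 : ℂ)) * X + C (1 - Complex.I * (c 2 : ℂ))) *
                Qpoly c d 1 := by
            rw [hQdef]
            simp [Qpoly]
          refine ⟨?_, ?_, ?_⟩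
          · rw [h2]
            refine natDegree_mul_le.trans ?_
            rw [show Qpoly c d 1 = C (2 * (d 1 : ℂ)) from rfl, natDegree_C]
            have h1 := natDegree_linear_le (a := 1 + Complex.I * (c 2 : ℂ))
              (b := 1 - Complex.I * (c 2 : ℂ))
            omega
          · rw [h2]
            exact stepL (c 2) 0 _
              (by rw [show Qpoly c d 1 = C (2 * (d 1 : ℂ)) from rfl, natDegree_C]) hQr1
          · intro _
            rw [h2, show Qpoly c d 1 = C (2 * (d 1 : ℂ)) from rfl, coeff_mul_C,
              Finset.Icc_self, Finset.prod_singleton]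
            simp only [coeff_add, coeff_C_mul, coeff_X_one, coeff_C, Nat.one_ne_zero,
              if_false, add_zero, mul_one, Nat.succ_sub_one]
            ring
        · -- n = m + 1 ≥ 1
          refine ⟨?_, ?_, ?_⟩
          · rw [hQdef]
            refine (natDegree_sub_le _ _).trans (max_le ?_ ?_)
            · refine natDegree_mul_le.trans ?_
              have h1 := natDegree_linear_le (a := 1 + Complex.I * (c (m + 1 + 2) : ℂ))
                (b := 1 - Complex.I * (c (m + 1 + 2) : ℂ))
              have h2 : (Qpoly c d (m + 2)).natDegree ≤ m + 1 := by simpa using hQd1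
              omega
            · refine natDegree_mul_le.trans ?_
              have h1 : (C (4 * (d (m + 1 + 2) : ℂ)) * X).natDegree ≤ 1 :=
                natDegree_mul_le.trans (by simp only [natDegree_C, natDegree_X]; omega)
              have h2 : (Qpoly c d (m + 1)).natDegree ≤ m := by simpa using hQd
              omega
          · rw [hQdef, Polynomial.map_sub, reflect_sub]
            congr 1
            · exact stepL (c (m + 1 + 2)) (m + 1) _ hQd1 hQr1
            · exact stepM _ hm m _ hQd hQr
          · intro _
            have hc1 : (Qpoly c d (m + 1 + 1)).coeff (m + 1) =
                2 * (d 1 : ℂ) * ∏ k ∈ Finset.Icc 2 (m + 1 + 1), (1 + Complex.I * (c k : ℂ)) :=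
              hQc1 (by omega)
            have hct : (Qpoly c d (m + 1 + 2)).coeff (m + 1 + 2 - 1) =
                (1 + Complex.I * (c (m + 1 + 2) : ℂ)) * (Qpoly c d (m + 1 + 1)).coeff (m + 1) := by
              have h := coeff_top (Qpoly c d (m + 1 + 1)) (Qpoly c d (m + 1)) m hQd1 hQd
              rw [← hQdef] at h
              exact h
            rw [hct, hc1, Finset.prod_Icc_succ_top (by omega : 2 ≤ m + 1 + 1 + 1)]
            ring

/-- The polynomials `R_n` and `Q_n` are self-inversive (conjugate reciprocal):
`z^n conj(R_n(1/conj z)) = R_n(z)`, `z^{n-1} conj(Q_n(1/conj z)) = Q_n(z)`, equivalently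
`conj r_{n,j} = r_{n,n-j}` and `conj q_{n,j} = q_{n,n-1-j}`; moreover
`r_{n,n} = conj r_{n,0} = ∏_{k=1}^n (1 + i c_k)` for `n ≥ 1` and
`q_{n,n-1} = conj q_{n,0} = 2 d_1 ∏_{k=2}^n (1 + i c_k)` for `n ≥ 2`. -/
theorem stmt0 (c d : ℕ → ℝ) (n : ℕ) (hn : 1 ≤ n) :
    (∀ z : ℂ, z ≠ 0 →
        z ^ n * conj ((Rpoly c d n).eval (1 / conj z)) = (Rpoly c d n).eval z) ∧
    (∀ z : ℂ, z ≠ 0 →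
        z ^ (n - 1) * conj ((Qpoly c d n).eval (1 / conj z)) = (Qpoly c d n).eval z) ∧
    (∀ j, j ≤ n → conj ((Rpoly c d n).coeff j) = (Rpoly c d n).coeff (n - j)) ∧
    (∀ j, j ≤ n - 1 → conj ((Qpoly c d n).coeff j) = (Qpoly c d n).coeff (n - 1 - j)) ∧
    (Rpoly c d n).coeff n = conj ((Rpoly c d n).coeff 0) ∧
    (Rpoly c d n).coeff n = ∏ k ∈ Finset.Icc 1 n, (1 + Complex.I * (c k : ℂ)) ∧
    (2 ≤ n →
      (Qpoly c d n).coeff (n - 1) = conj ((Qpoly c d n).coeff 0) ∧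
      (Qpoly c d n).coeff (n - 1) =
        2 * (d 1 : ℂ) * ∏ k ∈ Finset.Icc 2 n, (1 + Complex.I * (c k : ℂ))) := by
  obtain ⟨⟨hRd, hRr, hRc⟩, hQd, hQr, hQc⟩ := RQkey c d n
  -- generic consequences
  have coeffs : ∀ (p : Polynomial ℂ) (N : ℕ),
      reflect N (p.map (starRingEnd ℂ)) = p →
      ∀ j, j ≤ N → conj (p.coeff j) = p.coeff (N - j) := by
    intro p N hrefl j hj
    conv_rhs => rw [← hrefl]
    rw [coeff_reflect, revAt_le (by omega), Nat.sub_sub_self hj, coeff_map]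
  have evals : ∀ (p : Polynomial ℂ) (N : ℕ), p.natDegree ≤ N →
      reflect N (p.map (starRingEnd ℂ)) = p →
      ∀ z : ℂ, z ≠ 0 → z ^ N * conj (p.eval (1 / conj z)) = p.eval z := by
    intro p N hdeg hrefl z hz
    have e1 : conj (p.eval (1 / conj z)) = (p.map (starRingEnd ℂ)).eval z⁻¹ := by
      rw [eval_map]
      have : (z : ℂ)⁻¹ = (starRingEnd ℂ) (1 / conj z) := by
        rw [one_div, map_inv₀, Complex.conj_conj]
      rw [this, eval₂_at_apply]
    rw [e1, ← eval_reflect' N _ (natDegree_map_le.trans hdeg) z hz, hrefl]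
  refine ⟨evals _ n hRd hRr, evals _ (n - 1) hQd hQr, coeffs _ n hRr, coeffs _ (n - 1) hQr,
    ?_, hRc, ?_⟩
  · have := coeffs _ n hRr 0 (by omega)
    rw [Nat.sub_zero] at this
    exact this.symm
  · intro h2
    refine ⟨?_, hQc (by omega)⟩
    have := coeffs _ (n - 1) hQr 0 (by omega)
    rw [Nat.sub_zero] at this
    exact this.symm
end

section
/- Assume d_n ≠ 0 for all n ≥ 1. Then there exists a sequence ν : ℤ → ℂ with ν_n = -conj(ν_{-n+1}) for all n ≥ 1 such that the moment functional N defined by ν satisfies, for every n ≥ 1: N[z^{-n+j} R_n(z)] = 0 for j = 0, 1, ..., n-1; N[z^{-n-1} R_n(z)] = -conj(γ_n); and N[R_n(z)] = γ_n, where γ_0 = ν_0 = 2 d_1/(1 + i c_1) and γ_n = (4 d_{n+1}/(1 + i c_{n+1})) γ_{n-1} for n ≥ 1. -/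
open Polynomial MeasureTheory Finset
open scoped ComplexConjugate

/-- The moment functional `N` determined by `ν : ℤ → ℂ` (with `N[z^{-k}] = ν k`),
applied to the Laurent polynomial `z^m p(z)`. -/
noncomputable def momFun (ν : ℤ → ℂ) (m : ℤ) (p : Polynomial ℂ) : ℂ :=
  ∑ j ∈ Finset.range (p.natDegree + 1), p.coeff j * ν (-(m + (j : ℤ)))

/-- The constants `γ_n`: `γ_0 = 2 d_1/(1 + i c_1)` and
`γ_n = (4 d_{n+1}/(1 + i c_{n+1})) γ_{n-1}` for `n ≥ 1`. -/
noncomputable def gam (c d : ℕ → ℝ) : ℕ → ℂ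
  | 0 => 2 * (d 1 : ℂ) / (1 + Complex.I * (c 1 : ℂ))
  | (n + 1) => 4 * (d (n + 2) : ℂ) / (1 + Complex.I * (c (n + 2) : ℂ)) * gam c d n


lemma one_add_I_mul_ne (x : ℝ) : (1 + Complex.I * (x:ℂ)) ≠ 0 := by
  intro h
  have := congrArg Complex.re h
  simp [Complex.add_re, Complex.mul_re] at this

lemma conj_one_add_I_mul (x : ℝ) :
    conj (1 + Complex.I * (x:ℂ)) = 1 - Complex.I * (x:ℂ) := by
  simp [map_add, Complex.conj_I, sub_eq_add_neg]
lemma conj_one_sub_I_mul (x : ℝ) :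
    conj (1 - Complex.I * (x:ℂ)) = 1 + Complex.I * (x:ℂ) := by
  simp [map_sub, Complex.conj_I]

lemma one_sub_I_mul_ne (x : ℝ) : (1 - Complex.I * (x:ℂ)) ≠ 0 := by
  intro h
  have := congrArg Complex.re h
  simp [Complex.sub_re, Complex.mul_re] at this

lemma Rpoly_natDegree_le (c d : ℕ → ℝ) : ∀ n, (Rpoly c d n).natDegree ≤ n := by
  intro n
  induction n using Nat.strong_induction_on with
  | _ n ih =>
    match n with
    | 0 => simp [Rpoly]
    | 1 => exact natDegree_linear_le
    | (n+2) =>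
      rw [Rpoly]
      refine (natDegree_sub_le _ _).trans (max_le ?_ ?_)
      · refine (natDegree_mul_le).trans ?_
        have h1 : (C (1 + Complex.I * (c (n + 2) : ℂ)) * X +
            C (1 - Complex.I * (c (n + 2) : ℂ))).natDegree ≤ 1 := natDegree_linear_le
        have h2 := ih (n+1) (by omega)
        omega
      · refine (natDegree_mul_le).trans ?_
        have h1 : (C (4 * (d (n + 2) : ℂ)) * X).natDegree ≤ 1 :=
          (natDegree_C_mul_le _ _).trans natDegree_X_le
        have h2 := ih n (by omega)
        omega

lemma lin_coeff_succ (a b : ℂ) (p : Polynomial ℂ) (j : ℕ) :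
    ((C a * X + C b) * p).coeff (j+1) = a * p.coeff j + b * p.coeff (j+1) := by
  rw [add_mul, coeff_add, mul_assoc, coeff_C_mul, coeff_X_mul, coeff_C_mul]

lemma lin_coeff_zero (a b : ℂ) (p : Polynomial ℂ) :
    ((C a * X + C b) * p).coeff 0 = b * p.coeff 0 := by
  simp [add_mul, mul_assoc, mul_coeff_zero]

lemma cx_coeff_succ (e : ℂ) (p : Polynomial ℂ) (j : ℕ) :
    (C e * X * p).coeff (j+1) = e * p.coeff j := by
  rw [mul_assoc, coeff_C_mul, coeff_X_mul]

lemma cx_coeff_zero (e : ℂ) (p : Polynomial ℂ) :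
    (C e * X * p).coeff 0 = 0 := by
  simp [mul_assoc, mul_coeff_zero]

lemma Rpoly_coeff_gt (c d : ℕ → ℝ) (n j : ℕ) (h : n < j) :
    (Rpoly c d n).coeff j = 0 :=
  coeff_eq_zero_of_natDegree_lt (lt_of_le_of_lt (Rpoly_natDegree_le c d n) h)

noncomputable def Rlead (c : ℕ → ℝ) (n : ℕ) : ℂ :=
  ∏ k ∈ Finset.range n, (1 + Complex.I * (c (k+1) : ℂ))

lemma Rpoly_coeff_top (c d : ℕ → ℝ) : ∀ n, (Rpoly c d n).coeff n = Rlead c n := by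
  intro n
  induction n using Nat.strong_induction_on with
  | _ n ih =>
    match n with
    | 0 => simp [Rpoly, Rlead]
    | 1 => simp [Rpoly, Rlead, coeff_add, coeff_C_mul, coeff_X_one, coeff_C, coeff_one]
    | (n+2) =>
      rw [Rpoly, coeff_sub, lin_coeff_succ, cx_coeff_succ,
        Rpoly_coeff_gt c d (n+1) (n+2) (by omega), Rpoly_coeff_gt c d n (n+1) (by omega),
        ih (n+1) (by omega)]
      simp [Rlead, Finset.prod_range_succ]
      ring

lemma Rpoly_coeff_conj (c d : ℕ → ℝ) : ∀ n j k : ℕ, j + k = n →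
    (Rpoly c d n).coeff j = conj ((Rpoly c d n).coeff k) := by
  intro n
  induction n using Nat.strong_induction_on with
  | _ n ih =>
    match n with
    | 0 =>
      intro j k hjk
      obtain ⟨rfl, rfl⟩ : j = 0 ∧ k = 0 := by omega
      simp [Rpoly]
    | 1 =>
      intro j k hjk
      rcases (by omega : j = 0 ∧ k = 1 ∨ j = 1 ∧ k = 0) with ⟨rfl, rfl⟩ | ⟨rfl, rfl⟩ <;>
        simp [Rpoly, coeff_add, coeff_C_mul, coeff_X_one, coeff_C, coeff_one,
          map_add, map_sub, map_mul, Complex.conj_I, Complex.conj_ofReal] <;> ring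
    | (n+2) =>
      intro j k hjk
      have hA := fun j k h => ih (n+1) (by omega) j k h
      have hB := fun j k h => ih n (by omega) j k h
      match j, k with
      | 0, k =>
        have hk : k = n + 2 := by omega
        subst hk
        rw [Rpoly, coeff_sub, coeff_sub, lin_coeff_zero, cx_coeff_zero,
          lin_coeff_succ, cx_coeff_succ,
          Rpoly_coeff_gt c d (n+1) (n+2) (by omega), Rpoly_coeff_gt c d n (n+1) (by omega),
          hA (n+1) 0 (by omega)]
        simp only [map_add, map_sub, map_mul, map_one, map_ofNat, Complex.conj_I,
          Complex.conj_ofReal, Complex.conj_conj, mul_zero, sub_zero, add_zero, zero_add]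
        ring
      | j, 0 =>
        have hj : j = n + 2 := by omega
        subst hj
        rw [Rpoly, coeff_sub, coeff_sub, lin_coeff_zero, cx_coeff_zero,
          lin_coeff_succ, cx_coeff_succ,
          Rpoly_coeff_gt c d (n+1) (n+2) (by omega), Rpoly_coeff_gt c d n (n+1) (by omega),
          hA (n+1) 0 (by omega)]
        simp only [map_add, map_sub, map_mul, map_one, map_ofNat, Complex.conj_I,
          Complex.conj_ofReal, Complex.conj_conj, mul_zero, sub_zero, add_zero, zero_add]
        ring
      | (j+1), (k+1) =>
        rw [Rpoly, coeff_sub, coeff_sub, lin_coeff_succ, cx_coeff_succ,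
          lin_coeff_succ, cx_coeff_succ,
          hA j (k+1) (by omega), hA (j+1) k (by omega), hB j k (by omega)]
        simp only [map_add, map_sub, map_mul, map_one, map_ofNat, Complex.conj_I,
          Complex.conj_ofReal, Complex.conj_conj, mul_zero, sub_zero, add_zero, zero_add]
        ring

lemma momFun_eq_momF (ν : ℤ → ℂ) (m : ℤ) (p : Polynomial ℂ) (M : ℕ)
    (h : p.natDegree < M) :
    momFun ν m p = ∑ j ∈ Finset.range M, p.coeff j * ν (-(m + (j : ℤ))) := by
  unfold momFun
  apply Finset.sum_subset (Finset.range_subset_range.mpr h)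
  intro j hj hj'
  rw [coeff_eq_zero_of_natDegree_lt (by simp at hj' ⊢; omega), zero_mul]

lemma momFun_Rpoly_rec (c d : ℕ → ℝ) (ν : ℤ → ℂ) (m : ℤ) (n : ℕ) :
    momFun ν m (Rpoly c d (n+2)) =
      (1 + Complex.I * (c (n+2) : ℂ)) * momFun ν (m+1) (Rpoly c d (n+1))
      + (1 - Complex.I * (c (n+2) : ℂ)) * momFun ν m (Rpoly c d (n+1))
      - 4 * (d (n+2) : ℂ) * momFun ν (m+1) (Rpoly c d n) := by
  set a : ℂ := 1 + Complex.I * (c (n+2) : ℂ) with ha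
  set b : ℂ := 1 - Complex.I * (c (n+2) : ℂ) with hb
  set e : ℂ := 4 * (d (n+2) : ℂ) with he
  rw [momFun_eq_momF ν m _ (n+3) (by have := Rpoly_natDegree_le c d (n+2); omega),
      momFun_eq_momF ν (m+1) (Rpoly c d (n+1)) (n+2)
        (by have := Rpoly_natDegree_le c d (n+1); omega),
      momFun_eq_momF ν m (Rpoly c d (n+1)) (n+3)
        (by have := Rpoly_natDegree_le c d (n+1); omega),
      momFun_eq_momF ν (m+1) (Rpoly c d n) (n+2)
        (by have := Rpoly_natDegree_le c d n; omega)]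
  rw [Finset.mul_sum, Finset.mul_sum, Finset.mul_sum]
  rw [Finset.sum_range_succ' (fun j => (Rpoly c d (n+2)).coeff j * ν (-(m + (j : ℤ)))) (n+2)]
  rw [Finset.sum_range_succ' (fun j => b * ((Rpoly c d (n+1)).coeff j * ν (-(m + (j : ℤ))))) (n+2)]
  have hsplit : ∀ j ∈ Finset.range (n+2),
      (Rpoly c d (n+2)).coeff (j+1) * ν (-(m + ((j+1 : ℕ) : ℤ))) =
      a * ((Rpoly c d (n+1)).coeff j * ν (-((m+1) + (j : ℤ))))
      + b * ((Rpoly c d (n+1)).coeff (j+1) * ν (-(m + ((j+1 : ℕ) : ℤ))))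
      - e * ((Rpoly c d n).coeff j * ν (-((m+1) + (j : ℤ)))) := by
    intro j _
    have harg : (-(m + ((j+1 : ℕ) : ℤ))) = -((m+1) + (j : ℤ)) := by push_cast; ring
    rw [show Rpoly c d (n+2) = (C a * X + C b) * Rpoly c d (n+1) - C e * X * Rpoly c d n
          from by rw [Rpoly],
      coeff_sub, lin_coeff_succ, cx_coeff_succ, harg]
    ring
  rw [Finset.sum_congr rfl hsplit]
  rw [Finset.sum_sub_distrib, Finset.sum_add_distrib]
  have h0 : (Rpoly c d (n+2)).coeff 0 * ν (-(m + ((0:ℕ) : ℤ))) =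
      b * ((Rpoly c d (n+1)).coeff 0 * ν (-(m + ((0:ℕ) : ℤ)))) := by
    rw [show Rpoly c d (n+2) = (C a * X + C b) * Rpoly c d (n+1) - C e * X * Rpoly c d n
          from by rw [Rpoly],
      coeff_sub, lin_coeff_zero, cx_coeff_zero]
    ring
  rw [h0]
  ring

lemma momFun_conj (ν : ℤ → ℂ) (hν : ∀ k : ℤ, conj (ν k) = -ν (-k + 1)) (n : ℕ)
    (p : Polynomial ℂ) (hdeg : p.natDegree ≤ n)
    (hsym : ∀ j k : ℕ, j + k = n → p.coeff j = conj (p.coeff k)) (m : ℤ) :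
    conj (momFun ν m p) = - momFun ν (-m - (n : ℤ) - 1) p := by
  rw [momFun_eq_momF ν m p (n+1) (by omega),
      momFun_eq_momF ν (-m - (n : ℤ) - 1) p (n+1) (by omega), map_sum,
      ← Finset.sum_range_reflect (fun j => conj (p.coeff j * ν (-(m + (j : ℤ))))) (n+1),
      ← Finset.sum_neg_distrib]
  apply Finset.sum_congr rfl
  intro j hj
  simp only [Finset.mem_range] at hj
  simp only [Nat.add_sub_cancel]
  rw [map_mul, ← hsym j (n-j) (by omega), hν]
  have harg : -(-(m + ((n - j : ℕ) : ℤ))) + 1 = -((-m - (n : ℤ) - 1) + (j : ℤ)) := by omega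
  rw [harg]
  ring

noncomputable def muF (c d : ℕ → ℝ) : ℕ → ℂ
  | 0 => gam c d 0
  | (n+1) => (gam c d (n+1) - ∑ j ∈ (Finset.range (n+1)).attach,
      (Rpoly c d (n+1)).coeff j * muF c d j) / ((Rpoly c d (n+1)).coeff (n+1))
  decreasing_by exact Finset.mem_range.mp j.2

noncomputable def nuF (c d : ℕ → ℝ) (k : ℤ) : ℂ :=
  if k ≤ 0 then muF c d (-k).toNat else -conj (muF c d (k-1).toNat)

lemma nuF_conj (c d : ℕ → ℝ) (k : ℤ) : conj (nuF c d k) = -nuF c d (-k + 1) := by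
  unfold nuF
  by_cases hk : k ≤ 0
  · rw [if_pos hk, if_neg (by omega)]
    have : -k + 1 - 1 = -k := by ring
    rw [this]
    simp
  · rw [if_neg hk, if_pos (by omega)]
    have : -(-k + 1) = k - 1 := by ring
    rw [this]
    simp

lemma nuF_neg (c d : ℕ → ℝ) (j : ℕ) : nuF c d (-(0 + (j:ℤ))) = muF c d j := by
  unfold nuF
  rw [if_pos (by omega)]
  congr 1
  omega

lemma Rlead_ne (c : ℕ → ℝ) (n : ℕ) : Rlead c n ≠ 0 := by
  rw [Rlead, Finset.prod_ne_zero_iff]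
  exact fun k _ => one_add_I_mul_ne _

lemma Rcoeff_top_ne (c d : ℕ → ℝ) (n : ℕ) : (Rpoly c d n).coeff n ≠ 0 := by
  rw [Rpoly_coeff_top]; exact Rlead_ne c n

lemma Glem (c d : ℕ → ℝ) : ∀ n, momFun (nuF c d) 0 (Rpoly c d n) = gam c d n := by
  intro n
  match n with
  | 0 =>
    rw [momFun_eq_momF _ 0 _ 1 (by have := Rpoly_natDegree_le c d 0; omega)]
    rw [Finset.sum_range_one, nuF_neg]
    have : (Rpoly c d 0).coeff 0 = 1 := by simp [Rpoly]
    rw [this, one_mul]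
    show muF c d 0 = _
    rw [muF]
  | (n+1) =>
    rw [momFun_eq_momF _ 0 _ (n+2) (by have := Rpoly_natDegree_le c d (n+1); omega)]
    simp only [nuF_neg]
    rw [Finset.sum_range_succ]
    have hmu : muF c d (n+1) = (gam c d (n+1) - ∑ j ∈ Finset.range (n+1),
        (Rpoly c d (n+1)).coeff j * muF c d j) / ((Rpoly c d (n+1)).coeff (n+1)) := by
      rw [muF, Finset.sum_attach (Finset.range (n+1))
        (fun j => (Rpoly c d (n+1)).coeff j * muF c d j)]
    rw [hmu, mul_comm, div_mul_cancel₀ _ (Rcoeff_top_ne c d (n+1))]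
    ring

lemma conjGlem (c d : ℕ → ℝ) (n : ℕ) :
    momFun (nuF c d) (-(n:ℤ) - 1) (Rpoly c d n) = -conj (gam c d n) := by
  have h := momFun_conj (nuF c d) (nuF_conj c d) n (Rpoly c d n)
    (Rpoly_natDegree_le c d n) (Rpoly_coeff_conj c d n) 0
  rw [Glem] at h
  have e : (-(n:ℤ) - 1) = -0 - (n:ℤ) - 1 := by ring
  rw [e]
  linear_combination h

lemma Zlem (c d : ℕ → ℝ) : ∀ n, ∀ j : ℕ, j < n →
    momFun (nuF c d) (-(n:ℤ) + (j:ℤ)) (Rpoly c d n) = 0 := by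
  intro n
  induction n using Nat.strong_induction_on with
  | _ n ih =>
  match n with
  | 0 => intro j hj; omega
  | 1 =>
    intro j hj
    have hj0 : j = 0 := by omega
    subst hj0
    rw [momFun_eq_momF _ _ _ 2 (by have := Rpoly_natDegree_le c d 1; omega),
      Finset.sum_range_succ, Finset.sum_range_one]
    have hc0 : (Rpoly c d 1).coeff 0 = 1 - Complex.I * (c 1 : ℂ) := by
      simp [Rpoly, coeff_add, coeff_C_mul, coeff_X_one, coeff_C, coeff_one]
    have hc1 : (Rpoly c d 1).coeff 1 = 1 + Complex.I * (c 1 : ℂ) := by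
      simp [Rpoly, coeff_add, coeff_C_mul, coeff_X_one, coeff_C, coeff_one]
    have e0 : (-(-((1:ℕ):ℤ) + ((0:ℕ):ℤ) + ((0:ℕ):ℤ))) = 1 := by omega
    have e1 : (-(-((1:ℕ):ℤ) + ((0:ℕ):ℤ) + ((1:ℕ):ℤ))) = 0 := by omega
    rw [hc0, hc1, e0, e1]
    have hν1 : nuF c d 1 = -conj (muF c d 0) := by
      unfold nuF
      norm_num
    have hν0 : nuF c d 0 = muF c d 0 := by
      unfold nuF
      norm_num
    rw [hν1, hν0]
    have hmu0 : muF c d 0 = 2 * (d 1 : ℂ) / (1 + Complex.I * (c 1 : ℂ)) := by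
      rw [muF, gam]
    rw [hmu0, map_div₀, conj_one_add_I_mul]
    have : conj (2 * ((d 1 : ℝ) : ℂ)) = 2 * ((d 1 : ℝ) : ℂ) := by
      simp [map_mul, Complex.conj_ofReal, map_ofNat]
    rw [this]
    field_simp [one_add_I_mul_ne, one_sub_I_mul_ne]
    try ring
  | (n+2) =>
    intro j hj
    set ν := nuF c d with hνdef
    set m : ℤ := -((n+2:ℕ):ℤ) + (j:ℤ) with hm
    rw [momFun_Rpoly_rec]
    by_cases h0 : j = 0
    · subst h0
      have hT1 : momFun ν (m+1) (Rpoly c d (n+1)) = 0 := by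
        have e : m + 1 = -(((n+1:ℕ)):ℤ) + (((0:ℕ)):ℤ) := by omega
        rw [e]; exact ih (n+1) (by omega) 0 (by omega)
      have hT2 : momFun ν m (Rpoly c d (n+1)) = -conj (gam c d (n+1)) := by
        have e : m = -(((n+1:ℕ)):ℤ) - 1 := by omega
        rw [e]; exact conjGlem c d (n+1)
      have hT3 : momFun ν (m+1) (Rpoly c d n) = -conj (gam c d n) := by
        have e : m + 1 = -((n:ℕ):ℤ) - 1 := by omega
        rw [e]; exact conjGlem c d n
      rw [hT1, hT2, hT3]
      rw [show gam c d (n+1) = 4 * (d (n+2) : ℂ) / (1 + Complex.I * (c (n+2) : ℂ)) *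
        gam c d n from rfl]
      rw [map_mul, map_div₀, conj_one_add_I_mul]
      have : conj (4 * ((d (n+2) : ℝ) : ℂ)) = 4 * ((d (n+2) : ℝ) : ℂ) := by
        simp [map_mul, Complex.conj_ofReal, map_ofNat]
      rw [this]
      field_simp [one_sub_I_mul_ne]
      try ring
    · by_cases h1 : j = n+1
      · subst h1
        have hT1 : momFun ν (m+1) (Rpoly c d (n+1)) = gam c d (n+1) := by
          have e : m + 1 = 0 := by omega
          rw [e]; exact Glem c d (n+1)
        have hT2 : momFun ν m (Rpoly c d (n+1)) = 0 := by
          have e : m = -(((n+1:ℕ)):ℤ) + ((n:ℕ):ℤ) := by omega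
          rw [e]; exact ih (n+1) (by omega) n (by omega)
        have hT3 : momFun ν (m+1) (Rpoly c d n) = gam c d n := by
          have e : m + 1 = 0 := by omega
          rw [e]; exact Glem c d n
        rw [hT1, hT2, hT3]
        rw [show gam c d (n+1) = 4 * (d (n+2) : ℂ) / (1 + Complex.I * (c (n+2) : ℂ)) *
          gam c d n from rfl]
        field_simp [one_add_I_mul_ne]
        try ring
      · obtain ⟨j', rfl⟩ : ∃ j', j = j' + 1 := ⟨j - 1, by omega⟩
        have hT1 : momFun ν (m+1) (Rpoly c d (n+1)) = 0 := by
          have e : m + 1 = -(((n+1:ℕ)):ℤ) + (((j'+1:ℕ)):ℤ) := by omega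
          rw [e]; exact ih (n+1) (by omega) (j'+1) (by omega)
        have hT2 : momFun ν m (Rpoly c d (n+1)) = 0 := by
          have e : m = -(((n+1:ℕ)):ℤ) + ((j':ℕ):ℤ) := by omega
          rw [e]; exact ih (n+1) (by omega) j' (by omega)
        have hT3 : momFun ν (m+1) (Rpoly c d n) = 0 := by
          have e : m + 1 = -((n:ℕ):ℤ) + ((j':ℕ):ℤ) := by omega
          rw [e]; exact ih n (by omega) j' (by omega)
        rw [hT1, hT2, hT3]
        ring

/-- If `d_n ≠ 0` for all `n ≥ 1` there exists `ν : ℤ → ℂ` with `ν_n = -conj ν_{-n+1}`,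
`ν_0 = γ_0`, such that the moment functional `N` defined by `ν` satisfies
`N[z^{-n+j} R_n] = 0` for `0 ≤ j ≤ n-1`, `N[z^{-n-1} R_n] = -conj γ_n` and `N[R_n] = γ_n`. -/
theorem stmt2 (c d : ℕ → ℝ) (hd : ∀ n, 1 ≤ n → d n ≠ 0) :
    ∃ ν : ℤ → ℂ,
      (∀ n : ℤ, 1 ≤ n → ν n = -conj (ν (-n + 1))) ∧
      ν 0 = gam c d 0 ∧
      ∀ n : ℕ, 1 ≤ n →
        (∀ j : ℕ, j < n → momFun ν (-(n : ℤ) + (j : ℤ)) (Rpoly c d n) = 0) ∧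
        momFun ν (-(n : ℤ) - 1) (Rpoly c d n) = -conj (gam c d n) ∧
        momFun ν 0 (Rpoly c d n) = gam c d n := by
  refine ⟨nuF c d, ?_, ?_, ?_⟩
  · intro n hn
    have h := nuF_conj c d (-n + 1)
    have e : -(-n + 1) + 1 = n := by ring
    rw [e] at h
    linear_combination h
  · show nuF c d 0 = _
    unfold nuF
    norm_num
    show muF c d 0 = _
    rw [muF]
  · intro n hn
    exact ⟨fun j hj => Zlem c d n j hj, conjGlem c d n, Glem c d n⟩
end

section
/- Write the zeros of R_n as z_{n,j} = e^{i θ_{n,j}}, j = 1, ..., n, with 0 < θ_{n,1} < θ_{n,2} < ... < θ_{n,n} < 2π. Then for every n ≥ 1 the zeros of R_n and R_{n+1} interlace: 0 < θ_{n+1,1} < θ_{n,1} < θ_{n+1,2} < θ_{n,2} < ... < θ_{n,n} < θ_{n+1,n+1} < 2π. -/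
open Polynomial MeasureTheory Finset
open scoped ComplexConjugate

/-- `g` is a parameter sequence for the sequence `d_1, d_2, …`:
`0 ≤ g_0 < 1`, `0 < g_n < 1` for `n ≥ 1`, and `d_n = (1 - g_{n-1}) g_n` for `n ≥ 1`. -/
def IsParamSeq (d g : ℕ → ℝ) : Prop :=
  0 ≤ g 0 ∧ g 0 < 1 ∧ (∀ n, 1 ≤ n → 0 < g n ∧ g n < 1) ∧
    ∀ n, 1 ≤ n → d n = (1 - g (n - 1)) * g n

/-- `d_1, d_2, …` is a positive chain sequence. -/
def IsPositiveChainSeq (d : ℕ → ℝ) : Prop := ∃ g, IsParamSeq d g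

/-! ### Auxiliary development -/

namespace Stmt4Aux

/-! #### Generic helper lemmas -/

/-- sign transfer along a zero-free interval -/
lemma sign_transfer {f : ℝ → ℝ} (hf : Continuous f) {a b : ℝ} (hab : a ≤ b)
    (hno : ∀ x, a ≤ x → x ≤ b → f x ≠ 0) : (0 < f a ↔ 0 < f b) := by
  constructor
  · intro ha
    by_contra hb
    push_neg at hb
    have hb' : f b < 0 := lt_of_le_of_ne hb (hno b hab le_rfl)
    obtain ⟨x, hx, hfx⟩ := intermediate_value_Icc' hab hf.continuousOn
      (show (0:ℝ) ∈ Set.Icc (f b) (f a) from ⟨hb'.le, ha.le⟩)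
    exact hno x hx.1 hx.2 hfx
  · intro hb
    by_contra ha
    push_neg at ha
    have ha' : f a < 0 := lt_of_le_of_ne ha (hno a le_rfl hab)
    obtain ⟨x, hx, hfx⟩ := intermediate_value_Icc hab hf.continuousOn
      (show (0:ℝ) ∈ Set.Icc (f a) (f b) from ⟨ha'.le, hb.le⟩)
    exact hno x hx.1 hx.2 hfx

lemma exists_zero_between {f : ℝ → ℝ} (hf : Continuous f) {a b : ℝ} (hab : a ≤ b)
    (hs : f a * f b < 0) : ∃ x, a < x ∧ x < b ∧ f x = 0 := by
  have ha : f a ≠ 0 := fun h => by simp [h] at hs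
  have hb : f b ≠ 0 := fun h => by simp [h] at hs
  have key : ∃ x, a ≤ x ∧ x ≤ b ∧ f x = 0 := by
    rcases lt_or_gt_of_ne ha with ha' | ha'
    · have hb' : 0 < f b := by nlinarith
      obtain ⟨x, hx, hfx⟩ := intermediate_value_Icc hab hf.continuousOn ⟨ha'.le, hb'.le⟩
      exact ⟨x, hx.1, hx.2, hfx⟩
    · have hb' : f b < 0 := by nlinarith
      obtain ⟨x, hx, hfx⟩ := intermediate_value_Icc' hab hf.continuousOn ⟨hb'.le, ha'.le⟩
      exact ⟨x, hx.1, hx.2, hfx⟩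
  obtain ⟨x, h1, h2, hfx⟩ := key
  refine ⟨x, lt_of_le_of_ne h1 ?_, lt_of_le_of_ne h2 ?_, hfx⟩
  · rintro rfl; exact ha hfx
  · rintro rfl; exact hb hfx

/-- counting lemma: for a strictly monotone tuple, `f m < x` iff `m` is below the count. -/
lemma count_lt {M : ℕ} {f : Fin M → ℝ} (hf : StrictMono f) (x : ℝ) (m : Fin M) :
    f m < x ↔ (m : ℕ) < (univ.filter (fun j => f j < x)).card := by
  classical
  constructor
  · intro h
    have hsub : Finset.Iic m ⊆ univ.filter (fun j => f j < x) := by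
      intro j hj
      simp only [Finset.mem_Iic] at hj
      simp only [Finset.mem_filter, Finset.mem_univ, true_and]
      exact lt_of_le_of_lt (hf.monotone hj) h
    have := Finset.card_le_card hsub
    rw [Fin.card_Iic] at this
    omega
  · intro h
    by_contra hx
    push_neg at hx
    have hsub : univ.filter (fun j => f j < x) ⊆ Finset.Iio m := by
      intro j hj
      simp only [Finset.mem_filter, Finset.mem_univ, true_and] at hj
      simp only [Finset.mem_Iio]
      by_contra hjm
      push_neg at hjm
      exact absurd (lt_of_le_of_lt hx (lt_of_le_of_lt (hf.monotone hjm) hj)) (lt_irrefl x)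
    have := Finset.card_le_card hsub
    rw [Fin.card_Iio] at this
    omega

lemma nat_eq_of_iff_lt {a b n : ℕ} (ha : a ≤ n) (hb : b ≤ n)
    (h : ∀ m, m < n → (m < a ↔ m < b)) : a = b := by
  rcases Nat.lt_trichotomy a b with h1 | h1 | h1
  · have := h a (lt_of_lt_of_le h1 hb)
    omega
  · exact h1
  · have := h b (lt_of_lt_of_le h1 ha)
    omega

/-- a strictly monotone self-map of `Fin M` is the identity -/
lemma fin_strictMono_id {M : ℕ} {σ : Fin M → Fin M} (hσ : StrictMono σ) : ∀ k, σ k = k := by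
  have hinj : Function.Injective σ := hσ.injective
  have hsurj : Function.Surjective σ := Finite.surjective_of_injective hinj
  let e : Fin M ≃o Fin M := StrictMono.orderIsoOfSurjective σ hσ hsurj
  intro k
  have : (e k : ℕ) = k := Fin.coe_orderIso_apply e k
  exact Fin.ext this

lemma exp_inj_aux {x y : ℝ} (hx : -(2*Real.pi) < x - y) (hy : x - y < 2*Real.pi)
    (h : Complex.exp (Complex.I * x) = Complex.exp (Complex.I * y)) : x = y := by
  rw [Complex.exp_eq_exp_iff_exists_int] at h
  obtain ⟨k, hk⟩ := h
  have h2 : Complex.I * (x : ℂ) = Complex.I * ((y + k * (2*Real.pi) : ℝ) : ℂ) := by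
    push_cast
    linear_combination hk
  have h3 : (x : ℂ) = ((y + k * (2*Real.pi) : ℝ) : ℂ) :=
    mul_left_cancel₀ Complex.I_ne_zero h2
  have h4 : x = y + k * (2*Real.pi) := by exact_mod_cast h3
  have hpi := Real.pi_pos
  have hk0 : k = 0 := by
    have habs : |(k:ℝ)| * (2*Real.pi) < 1 * (2*Real.pi) := by
      rcases abs_cases (k:ℝ) with ⟨he, _⟩ | ⟨he, _⟩ <;> nlinarith
    have : |(k:ℝ)| < 1 := by
      have h2pi : (0:ℝ) < 2*Real.pi := by linarith
      exact lt_of_mul_lt_mul_right (by linarith [habs]) h2pi.le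
    have : ((|k| : ℤ) : ℝ) < 1 := by rwa [Int.cast_abs]
    have : |k| < 1 := by exact_mod_cast this
    exact Int.abs_lt_one_iff.1 this
  rw [hk0] at h4
  simpa using h4

/-! #### The real trigonometric form of `R_n` on the unit circle -/

noncomputable def tt (c : ℕ → ℝ) (n : ℕ) (x : ℝ) : ℝ :=
  2 * Real.cos (x/2) - 2 * c n * Real.sin (x/2)

noncomputable def w (c d : ℕ → ℝ) : ℕ → ℝ → ℝ
  | 0 => fun _ => 1
  | 1 => fun x => tt c 1 x
  | (n+2) => fun x => tt c (n+2) x * w c d (n+1) x - 4 * d (n+2) * w c d n x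

lemma tt_key (c : ℕ → ℝ) (n : ℕ) (x : ℝ) :
    ((tt c n x : ℂ)) * Complex.exp (Complex.I * x / 2) =
      (1 + Complex.I * (c n : ℂ)) * Complex.exp (Complex.I * x / 2) ^ 2
      + (1 - Complex.I * (c n : ℂ)) := by
  have h1 : Complex.exp (Complex.I * (x:ℂ) / 2) =
      Complex.cos (x/2 : ℝ) + Complex.sin (x/2 : ℝ) * Complex.I := by
    rw [show Complex.I * (x:ℂ) / 2 = (((x/2 : ℝ)):ℂ) * Complex.I by push_cast; ring,
      Complex.exp_mul_I]
  have h2 := Complex.cos_sq_add_sin_sq (((x/2 : ℝ)):ℂ)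
  rw [h1, tt]
  push_cast [Complex.ofReal_cos, Complex.ofReal_sin]
  push_cast at h2
  linear_combination (1 - Complex.I*(c n:ℂ)) * h2
    + (-Complex.sin ((x:ℂ)/2)^2 - 2*(c n:ℂ)*Complex.cos ((x:ℂ)/2)*Complex.sin ((x:ℂ)/2)
       - Complex.I*(c n:ℂ)*Complex.sin ((x:ℂ)/2)^2) * Complex.I_sq

lemma Rpoly_eval (c d : ℕ → ℝ) (n : ℕ) (x : ℝ) :
    (Rpoly c d n).eval (Complex.exp (Complex.I * x)) =
      Complex.exp (Complex.I * x / 2) ^ n * ((w c d n x : ℂ)) := by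
  set u := Complex.exp (Complex.I * x / 2) with hu
  have hu0 : u ≠ 0 := Complex.exp_ne_zero _
  have hx : Complex.exp (Complex.I * x) = u ^ 2 := by
    rw [hu, ← Complex.exp_nat_mul]; ring_nf
  induction n using Nat.twoStepInduction with
  | zero => simp [Rpoly, w]
  | one =>
      simp only [Rpoly, w, eval_add, eval_mul, eval_C, eval_X, pow_one, hx]
      have := tt_key c 1 x
      rw [← hu] at this
      linear_combination -this
  | more n ih ih1 =>
      rw [Rpoly, w]
      simp only [eval_sub, eval_mul, eval_add, eval_C, eval_X]
      rw [ih, ih1, hx]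
      push_cast
      have htt := tt_key c (n+2) x
      rw [← hu] at htt
      linear_combination (-(u^(n+1) * ((w c d (n+1) x : ℂ)))) * htt

lemma tt_cont (c : ℕ → ℝ) (n : ℕ) : Continuous (tt c n) := by
  unfold tt; fun_prop

lemma w_cont (c d : ℕ → ℝ) : ∀ n, Continuous (w c d n) := by
  intro n
  induction n using Nat.twoStepInduction with
  | zero => simpa [w] using continuous_const
  | one => simpa [w] using tt_cont c 1
  | more n ih ih1 =>
      show Continuous (fun x => tt c (n+2) x * w c d (n+1) x - 4 * d (n+2) * w c d n x)
      exact ((tt_cont c (n+2)).mul ih1).sub (continuous_const.mul ih)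

lemma tt_zero (c : ℕ → ℝ) (n : ℕ) : tt c n 0 = 2 := by
  simp [tt]

lemma tt_two_pi (c : ℕ → ℝ) (n : ℕ) : tt c n (2 * Real.pi) = -2 := by
  simp [tt, Real.cos_pi, Real.sin_pi]

lemma w_two_pi (c d : ℕ → ℝ) : ∀ n, w c d n (2 * Real.pi) = (-1)^n * w c d n 0 := by
  intro n
  induction n using Nat.twoStepInduction with
  | zero => simp [w]
  | one => show tt c 1 (2*Real.pi) = (-1)^1 * tt c 1 0; rw [tt_two_pi, tt_zero]; ring
  | more n ih ih1 =>
      show tt c (n+2) (2*Real.pi) * w c d (n+1) (2*Real.pi) - 4 * d (n+2) * w c d n (2*Real.pi)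
        = (-1)^(n+2) * (tt c (n+2) 0 * w c d (n+1) 0 - 4 * d (n+2) * w c d n 0)
      rw [tt_two_pi, tt_zero, ih, ih1]
      ring

section Chain

variable {c d g : ℕ → ℝ}
variable (hg0 : 0 ≤ g 0) (hg01 : g 0 < 1)
  (hg1 : ∀ n, 1 ≤ n → 0 < g n ∧ g n < 1)
  (hdg : ∀ n, 1 ≤ n → d (n+1) = (1 - g (n-1)) * g n)

include hg0 hg01 hg1 hdg

/-- positivity at 0, given the chain sequence parameters -/
lemma w_zero_pos :
    ∀ n, 0 < w c d n 0 ∧ 2 * (1 - g n) * w c d n 0 ≤ w c d (n+1) 0 := by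
  have hglt1 : ∀ n, g n < 1 := by
    intro n
    rcases Nat.eq_zero_or_pos n with rfl | hn
    · exact hg01
    · exact (hg1 n hn).2
  have hgge0 : ∀ n, 0 ≤ g n := by
    intro n
    rcases Nat.eq_zero_or_pos n with rfl | hn
    · exact hg0
    · exact (hg1 n hn).1.le
  intro n
  induction n with
  | zero =>
      constructor
      · show (0:ℝ) < 1; norm_num
      · show 2 * (1 - g 0) * 1 ≤ tt c 1 0
        rw [tt_zero]
        nlinarith [hg0]
  | succ n ih =>
      obtain ⟨hpos, hle⟩ := ih
      have hpos1 : 0 < w c d (n+1) 0 := by nlinarith [hglt1 n]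
      refine ⟨hpos1, ?_⟩
      show 2 * (1 - g (n+1)) * w c d (n+1) 0 ≤ w c d (n+2) 0
      have hd2 : d (n+2) = (1 - g n) * g (n+1) := by
        have := hdg (n+1) (by omega)
        simpa using this
      have hw2 : w c d (n+2) 0 = tt c (n+2) 0 * w c d (n+1) 0 - 4 * d (n+2) * w c d n 0 := rfl
      rw [hw2, tt_zero, hd2]
      nlinarith [hgge0 (n+1), hglt1 (n+1), (hg1 (n+1) (by omega)).1]

lemma w_zero_pos' : ∀ n, 0 < w c d n 0 :=
  fun n => (w_zero_pos hg0 hg01 hg1 hdg n).1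

lemma d_pos : ∀ n, 2 ≤ n → 0 < d n := by
  intro n hn
  obtain ⟨m, rfl⟩ : ∃ m, n = m + 2 := ⟨n - 2, by omega⟩
  have := hdg (m+1) (by omega)
  simp only [show m + 1 + 1 = m + 2 from rfl, Nat.add_sub_cancel] at this
  rw [this]
  have h1 : g m < 1 := by
    rcases Nat.eq_zero_or_pos m with rfl | hm
    · exact hg01
    · exact (hg1 m hm).2
  have h2 : 0 < g (m+1) := (hg1 (m+1) (by omega)).1
  nlinarith

end Chain

/-! #### Grid points -/

noncomputable def pts (θ : (n : ℕ) → Fin n → ℝ) (n : ℕ) (k : ℕ) : ℝ :=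
  if h : 1 ≤ k ∧ k ≤ n then θ n ⟨k-1, by omega⟩ else if k = 0 then 0 else 2*Real.pi

lemma pts_zero (θ : (n : ℕ) → Fin n → ℝ) (n : ℕ) : pts θ n 0 = 0 := by simp [pts]

lemma pts_mid (θ : (n : ℕ) → Fin n → ℝ) {n k : ℕ} (h1 : 1 ≤ k) (h2 : k ≤ n) :
    pts θ n k = θ n ⟨k-1, by omega⟩ := by simp [pts, h1, h2]

lemma pts_top (θ : (n : ℕ) → Fin n → ℝ) {n k : ℕ} (h : n < k) : pts θ n k = 2*Real.pi := by
  have h1 : ¬(1 ≤ k ∧ k ≤ n) := by omega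
  have h2 : k ≠ 0 := by omega
  simp [pts, h1, h2]

section PtsProps
variable {θ : (n : ℕ) → Fin n → ℝ}
  (hmono : ∀ n, StrictMono (θ n))
  (hrange : ∀ n, ∀ j : Fin n, 0 < θ n j ∧ θ n j < 2 * Real.pi)

include hmono hrange in
lemma pts_lt_succ {n k : ℕ} (hk : k ≤ n) : pts θ n k < pts θ n (k+1) := by
  rcases Nat.eq_zero_or_pos k with rfl | hk1
  · rcases Nat.eq_zero_or_pos n with rfl | hn
    · rw [pts_zero, pts_top θ (by omega)]
      positivity
    · rw [pts_zero, pts_mid θ (by omega) (by omega)]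
      exact (hrange n _).1
  · rcases Nat.lt_or_ge k n with hkn | hkn
    · rw [pts_mid θ (by omega) (by omega), pts_mid θ (by omega) (by omega)]
      exact hmono n (by simp [Fin.lt_def]; omega)
    · have hkn' : k = n := by omega
      subst hkn'
      rw [pts_mid θ (by omega) (by omega), pts_top θ (by omega)]
      exact (hrange k _).2

include hmono hrange in
lemma pts_lt_of_lt {n k l : ℕ} (hkl : k < l) (hl : l ≤ n + 1) : pts θ n k < pts θ n l := by
  induction l with
  | zero => omega
  | succ l ih =>
      rcases Nat.lt_or_ge k l with h | h
      · exact lt_trans (ih h (by omega)) (pts_lt_succ hmono hrange (by omega))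
      · have : k = l := by omega
        subst this
        exact pts_lt_succ hmono hrange (by omega)

include hmono hrange in
lemma pts_le_of_le {n k l : ℕ} (hkl : k ≤ l) (hl : l ≤ n + 1) : pts θ n k ≤ pts θ n l := by
  rcases Nat.lt_or_ge k l with h | h
  · exact (pts_lt_of_lt hmono hrange h hl).le
  · have : k = l := by omega
    subst this; exact le_rfl

include hrange in
lemma pts_nonneg (n k : ℕ) : 0 ≤ pts θ n k := by
  rcases Nat.eq_zero_or_pos k with rfl | h1
  · rw [pts_zero]
  · rcases Nat.lt_or_ge n k with h | h
    · rw [pts_top θ h]; positivity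
    · rw [pts_mid θ h1 h]; exact (hrange n _).1.le

include hrange in
lemma pts_le_two_pi (n k : ℕ) : pts θ n k ≤ 2*Real.pi := by
  rcases Nat.eq_zero_or_pos k with rfl | h1
  · rw [pts_zero]; positivity
  · rcases Nat.lt_or_ge n k with h | h
    · rw [pts_top θ h]
    · rw [pts_mid θ h1 h]; exact (hrange n _).2.le

end PtsProps

section Main

variable {c d : ℕ → ℝ} {θ : (n : ℕ) → Fin n → ℝ}
  (hmono : ∀ n, StrictMono (θ n))
  (hrange : ∀ n, ∀ j : Fin n, 0 < θ n j ∧ θ n j < 2 * Real.pi)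
  (hroots : ∀ n, 1 ≤ n → ∀ z : ℂ,
      (Rpoly c d n).eval z = 0 ↔ ∃ j : Fin n, z = Complex.exp (Complex.I * (θ n j : ℂ)))

include hrange hroots in
lemma w_zero_iff {n : ℕ} (hn : 1 ≤ n) {x : ℝ} (hx0 : 0 ≤ x) (hx2 : x ≤ 2*Real.pi) :
    w c d n x = 0 ↔ ∃ j : Fin n, x = θ n j := by
  have he := Rpoly_eval c d n x
  constructor
  · intro h
    have h0 : (Rpoly c d n).eval (Complex.exp (Complex.I * x)) = 0 := by
      rw [he, h]; simp
    obtain ⟨j, hj⟩ := (hroots n hn _).1 h0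
    obtain ⟨h1, h2⟩ := hrange n j
    exact ⟨j, exp_inj_aux (by linarith) (by linarith) hj⟩
  · rintro ⟨j, rfl⟩
    have h0 : (Rpoly c d n).eval (Complex.exp (Complex.I * (θ n j : ℂ))) = 0 :=
      (hroots n hn _).2 ⟨j, rfl⟩
    rw [he] at h0
    rcases mul_eq_zero.1 h0 with h | h
    · exact absurd h (pow_ne_zero _ (Complex.exp_ne_zero _))
    · exact_mod_cast h

/-- the sign of `w n` between consecutive zeros (indexed by the count of zeros below) -/
def Good (c d : ℕ → ℝ) (θ : (n : ℕ) → Fin n → ℝ) (n : ℕ) : Prop :=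
  ∀ x : ℝ, 0 ≤ x → x ≤ 2*Real.pi → (∀ j : Fin n, x ≠ θ n j) →
    0 < (-1:ℝ)^((univ.filter (fun j : Fin n => θ n j < x)).card) * w c d n x

/-- the zeros of level `n+1` lie in the open gaps of level `n` -/
def ChainP (θ : (n : ℕ) → Fin n → ℝ) (n : ℕ) : Prop :=
  ∀ k (hk : k < n + 1), pts θ n k < θ (n+1) ⟨k, hk⟩ ∧ θ (n+1) ⟨k, hk⟩ < pts θ n (k+1)

include hmono in
lemma count_eq {M : ℕ} {x : ℝ} {a : ℕ} (ha : a ≤ M)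
    (hiff : ∀ j : Fin M, θ M j < x ↔ (j:ℕ) < a) :
    (univ.filter (fun j : Fin M => θ M j < x)).card = a := by
  classical
  have hN : (univ.filter (fun j : Fin M => θ M j < x)).card ≤ M := by
    refine le_trans (Finset.card_filter_le _ _) ?_
    simp
  refine nat_eq_of_iff_lt hN ha ?_
  intro m hm
  constructor
  · intro h
    exact (hiff ⟨m, hm⟩).1 ((count_lt (hmono M) x ⟨m, hm⟩).2 h)
  · intro h
    exact (count_lt (hmono M) x ⟨m, hm⟩).1 ((hiff ⟨m, hm⟩).2 h)

variable {g : ℕ → ℝ}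
variable (hg0 : 0 ≤ g 0) (hg01 : g 0 < 1)
  (hg1 : ∀ n, 1 ≤ n → 0 < g n ∧ g n < 1)
  (hdg : ∀ n, 1 ≤ n → d (n+1) = (1 - g (n-1)) * g n)

include hmono hrange hroots hg0 hg01 hg1 hdg in
lemma master : ∀ n, Good c d θ n ∧ Good c d θ (n+1) ∧ ChainP θ n := by
  have hwpos := w_zero_pos' (c := c) hg0 hg01 hg1 hdg
  have hdpos := d_pos (d := d) hg0 hg01 hg1 hdg
  have hcont := w_cont c d
  have h2pi : (0:ℝ) < 2*Real.pi := by positivity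
  -- generic step A : signs of `w (M+1)` at the grid points of level `M`,
  -- given `Good (M-1)`-type info through `ChainP` structure.
  -- We prove the three statements by induction on `n`.
  intro n
  induction n with
  | zero =>
      refine ⟨?_, ?_, ?_⟩
      · -- Good 0
        intro x hx0 hx2 hne
        simp [w]
      · -- Good 1
        intro x hx0 hx2 hne
        have hth := hrange 1 ⟨0, one_pos⟩
        have hne0 : x ≠ θ 1 ⟨0, one_pos⟩ := hne _
        have hzero_char : ∀ t, 0 ≤ t → t ≤ 2*Real.pi → w c d 1 t = 0 → t = θ 1 ⟨0, one_pos⟩ := by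
          intro t ht0 ht2 ht
          obtain ⟨j, rfl⟩ := (w_zero_iff hrange hroots le_rfl ht0 ht2).1 ht
          congr 1
          exact Fin.ext (by omega)
        rcases lt_or_gt_of_ne hne0 with hlt | hgt
        · -- x below the unique zero, count = 0
          have hcount : (univ.filter (fun j : Fin (0+1) => θ (0+1) j < x)).card = 0 := by
            refine count_eq hmono (by omega) ?_
            intro j
            have hj : j = ⟨0, one_pos⟩ := Fin.ext (by omega)
            subst hj
            constructor
            · intro h
              exact absurd (h.trans hlt) (lt_irrefl _)
            · intro h
              exact absurd h (by omega)
          rw [hcount, pow_zero, one_mul]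
          have hno : ∀ t, 0 ≤ t → t ≤ x → w c d 1 t ≠ 0 := by
            intro t ht1 ht2 h0
            have := hzero_char t ht1 (le_trans ht2 hx2) h0
            subst this
            exact absurd (lt_of_le_of_lt ht2 hlt) (lt_irrefl _)
          exact (sign_transfer (hcont 1) hx0 hno).1 (hwpos 1)
        · -- x above the unique zero, count = 1
          have hcount : (univ.filter (fun j : Fin (0+1) => θ (0+1) j < x)).card = 1 := by
            refine count_eq hmono (by omega) ?_
            intro j
            have hj : j = ⟨0, one_pos⟩ := Fin.ext (by omega)
            subst hj
            constructor
            · intro _; omega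
            · intro _; exact hgt
          rw [hcount, pow_one]
          have hno : ∀ t, x ≤ t → t ≤ 2*Real.pi → w c d 1 t ≠ 0 := by
            intro t ht1 ht2 h0
            have := hzero_char t (le_trans hx0 ht1) ht2 h0
            subst this
            exact absurd (lt_of_lt_of_le hgt ht1) (lt_irrefl _)
          have h2pival : w c d 1 (2*Real.pi) < 0 := by
            rw [w_two_pi]
            have := hwpos 1
            nlinarith
          have hxne : w c d 1 x ≠ 0 := hno x le_rfl hx2
          have : ¬ (0 < w c d 1 x) := by
            intro h
            have := (sign_transfer (hcont 1) hx2 hno).1 h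
            linarith
          have : w c d 1 x < 0 := lt_of_le_of_ne (not_lt.1 this) hxne
          linarith
      · -- ChainP 0
        intro k hk
        have hk0 : k = 0 := by omega
        subst hk0
        rw [pts_zero, pts_top θ (by omega)]
        exact hrange 1 _
  | succ n ih =>
      obtain ⟨hG0, hG1, hCh⟩ := ih
      -- Step A: signs of `w (n+2)` at the grid points of level `n+1`
      have hSA : ∀ k, k ≤ n + 2 → 0 < (-1:ℝ)^k * w c d (n+2) (pts θ (n+1) k) := by
        intro k hk
        rcases Nat.eq_zero_or_pos k with rfl | hk1
        · rw [pts_zero, pow_zero, one_mul]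
          exact hwpos (n+2)
        · rcases Nat.lt_or_ge k (n+2) with hk2 | hk2
          · -- 1 ≤ k ≤ n+1 : the grid point is a zero of `w (n+1)`
            obtain ⟨m, rfl⟩ : ∃ m, k = m + 1 := ⟨k - 1, by omega⟩
            have hm : m < n + 1 := by omega
            have hpts : pts θ (n+1) (m+1) = θ (n+1) ⟨m, hm⟩ := by
              rw [pts_mid θ (by omega) (by omega)]
              exact congrArg _ (Fin.ext (by simp))
            have hyr := hrange (n+1) ⟨m, hm⟩
            set y := θ (n+1) ⟨m, hm⟩ with hy
            have hchm := hCh m hm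
            rw [← hy] at hchm
            have hw1 : w c d (n+1) y = 0 :=
              (w_zero_iff hrange hroots (by omega) hyr.1.le hyr.2.le).2 ⟨⟨m, hm⟩, hy⟩
            have hw2 : w c d (n+2) y = -(4 * d (n+2)) * w c d n y := by
              show tt c (n+2) y * w c d (n+1) y - 4 * d (n+2) * w c d n y = _
              rw [hw1]; ring
            have hlow : ∀ j : Fin n, (j:ℕ) < m → θ n j < y := by
              intro j hj
              have he : θ n j = pts θ n ((j:ℕ)+1) := by
                rw [pts_mid θ (by omega) (by omega)]
                exact congrArg _ (Fin.ext (by simp))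
              rw [he]
              exact lt_of_le_of_lt (pts_le_of_le hmono hrange (by omega) (by omega)) hchm.1
            have hhigh : ∀ j : Fin n, m ≤ (j:ℕ) → y < θ n j := by
              intro j hj
              have he : θ n j = pts θ n ((j:ℕ)+1) := by
                rw [pts_mid θ (by omega) (by omega)]
                exact congrArg _ (Fin.ext (by simp))
              rw [he]
              exact lt_of_lt_of_le hchm.2 (pts_le_of_le hmono hrange (by omega) (by omega))
            have hne : ∀ j : Fin n, y ≠ θ n j := by
              intro j
              rcases Nat.lt_or_ge (j:ℕ) m with h | h
              · exact (ne_of_gt (hlow j h))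
              · exact (ne_of_lt (hhigh j h))
            have hcnt : (univ.filter (fun j : Fin n => θ n j < y)).card = m := by
              refine count_eq hmono (by omega) ?_
              intro j
              constructor
              · intro h
                by_contra hc
                push_neg at hc
                exact absurd (h.trans (hhigh j hc)) (lt_irrefl _)
              · exact hlow j
            have hGny := hG0 y hyr.1.le hyr.2.le hne
            rw [hcnt] at hGny
            have hd2 : 0 < d (n+2) := hdpos (n+2) (by omega)
            rw [hpts]
            have hkey : (-1:ℝ)^(m+1) * w c d (n+2) y
                = 4 * d (n+2) * ((-1:ℝ)^m * w c d n y) := by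
              rw [hw2, pow_succ]; ring
            rw [hkey]
            exact mul_pos (by linarith) hGny
          · -- k = n+2 : the grid point is 2π
            have hk3 : k = n + 2 := by omega
            subst hk3
            rw [pts_top θ (by omega), w_two_pi, ← mul_assoc, ← pow_add]
            have hev : Even (n+2+(n+2)) := ⟨n+2, by ring⟩
            rw [hev.neg_one_pow, one_mul]
            exact hwpos (n+2)
      -- Step B: a zero of `w (n+2)` in each gap, giving `ChainP (n+1)`
      have hgap : ∀ k : Fin (n+2), ∃ j : Fin (n+2),
          pts θ (n+1) (k:ℕ) < θ (n+2) j ∧ θ (n+2) j < pts θ (n+1) ((k:ℕ)+1) := by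
        intro k
        have h1 := hSA (k:ℕ) (by omega)
        have h2 := hSA ((k:ℕ)+1) (by omega)
        have hlt : pts θ (n+1) (k:ℕ) < pts θ (n+1) ((k:ℕ)+1) :=
          pts_lt_succ hmono hrange (by omega)
        have hsq : (-1:ℝ)^(k:ℕ) * (-1:ℝ)^(k:ℕ) = 1 := by
          rw [← pow_add]
          exact Even.neg_one_pow ⟨(k:ℕ), by ring⟩
        have hprod : w c d (n+2) (pts θ (n+1) (k:ℕ))
            * w c d (n+2) (pts θ (n+1) ((k:ℕ)+1)) < 0 := by
          have hXY := mul_pos h1 h2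
          have heq : ((-1:ℝ)^(k:ℕ) * w c d (n+2) (pts θ (n+1) (k:ℕ)))
              * ((-1:ℝ)^((k:ℕ)+1) * w c d (n+2) (pts θ (n+1) ((k:ℕ)+1)))
              = ((-1:ℝ)^(k:ℕ) * (-1:ℝ)^(k:ℕ)) * (-1)
                * (w c d (n+2) (pts θ (n+1) (k:ℕ)) * w c d (n+2) (pts θ (n+1) ((k:ℕ)+1))) := by
            rw [pow_succ]; ring
          rw [heq, hsq] at hXY
          linarith
        obtain ⟨x, hx1, hx2, hx0⟩ := exists_zero_between (hcont (n+2)) hlt.le hprod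
        have hxlo : 0 ≤ x := le_trans (pts_nonneg hrange (n+1) (k:ℕ)) hx1.le
        have hxhi : x ≤ 2*Real.pi := le_trans hx2.le (pts_le_two_pi hrange (n+1) ((k:ℕ)+1))
        obtain ⟨j, rfl⟩ := (w_zero_iff hrange hroots (by omega) hxlo hxhi).1 hx0
        exact ⟨j, hx1, hx2⟩
      choose σ hσ1 hσ2 using hgap
      have hσmono : StrictMono σ := by
        intro a b hab
        have hab' : (a:ℕ) < (b:ℕ) := hab
        have h1 : θ (n+2) (σ a) < pts θ (n+1) ((a:ℕ)+1) := hσ2 a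
        have h2 : pts θ (n+1) ((a:ℕ)+1) ≤ pts θ (n+1) (b:ℕ) :=
          pts_le_of_le hmono hrange (by omega) (by omega)
        have h3 : pts θ (n+1) (b:ℕ) < θ (n+2) (σ b) := hσ1 b
        exact (hmono (n+2)).lt_iff_lt.1 (by linarith)
      have hσid := fin_strictMono_id hσmono
      have hCh1 : ChainP θ (n+1) := by
        intro k hk
        have h1 := hσ1 ⟨k, hk⟩
        have h2 := hσ2 ⟨k, hk⟩
        rw [hσid ⟨k, hk⟩] at h1 h2
        exact ⟨h1, h2⟩
      -- Step C: the sign pattern of `w (n+2)`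
      have hG2 : Good c d θ (n+2) := by
        intro x hx0 hx2 hne
        classical
        set N := (univ.filter (fun j : Fin (n+2) => θ (n+2) j < x)).card with hN
        have hNle : N ≤ n + 2 := by
          rw [hN]
          refine le_trans (Finset.card_filter_le _ _) (by simp)
        have hjlt : ∀ j : Fin (n+2), θ (n+2) j < x ↔ (j:ℕ) < N :=
          fun j => count_lt (hmono (n+2)) x j
        have ha := hSA N hNle
        set a := pts θ (n+1) N with haa
        have ha0 : 0 ≤ a := pts_nonneg hrange (n+1) N
        have ha2 : a ≤ 2*Real.pi := pts_le_two_pi hrange (n+1) N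
        have hloc : ∀ j : Fin (n+2),
            pts θ (n+1) (j:ℕ) < θ (n+2) j ∧ θ (n+2) j < pts θ (n+1) ((j:ℕ)+1) := by
          intro j
          have := hCh1 (j:ℕ) j.isLt
          simpa using this
        have hnozero : ∀ t, min a x ≤ t → t ≤ max a x → w c d (n+2) t ≠ 0 := by
          intro t ht1 ht2 h0
          have ht0 : 0 ≤ t := le_trans (le_min ha0 hx0) ht1
          have ht2' : t ≤ 2*Real.pi := le_trans ht2 (max_le ha2 hx2)
          obtain ⟨j, rfl⟩ := (w_zero_iff hrange hroots (by omega) ht0 ht2').1 h0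
          rcases Nat.lt_or_ge (j:ℕ) N with hj | hj
          · have e1 : θ (n+2) j < x := (hjlt j).2 hj
            have e2 : θ (n+2) j < a := by
              rw [haa]
              exact lt_of_lt_of_le (hloc j).2 (pts_le_of_le hmono hrange (by omega) (by omega))
            have hmm : θ (n+2) j < min a x := lt_min e2 e1
            linarith
          · have e1 : x ≤ θ (n+2) j := by
              by_contra hcon
              push_neg at hcon
              have := (hjlt j).1 hcon
              omega
            have e1' : x < θ (n+2) j := lt_of_le_of_ne e1 (hne j)
            have e2 : a < θ (n+2) j := by
              rw [haa]
              exact lt_of_le_of_lt (pts_le_of_le hmono hrange hj (by omega)) (hloc j).1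
            have hmm : max a x < θ (n+2) j := max_lt e2 e1'
            linarith
        have hFcont : Continuous (fun t => (-1:ℝ)^N * w c d (n+2) t) :=
          continuous_const.mul (hcont (n+2))
        have hFne : ∀ t, min a x ≤ t → t ≤ max a x → (-1:ℝ)^N * w c d (n+2) t ≠ 0 :=
          fun t h1 h2 => mul_ne_zero (pow_ne_zero _ (by norm_num)) (hnozero t h1 h2)
        rcases le_total a x with hax | hax
        · have hmin : min a x = a := min_eq_left hax
          have hmax : max a x = x := max_eq_right hax
          exact (sign_transfer hFcont hax
            (fun t h1 h2 => hFne t (by rw [hmin]; exact h1) (by rw [hmax]; exact h2))).1 ha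
        · have hmin : min a x = x := min_eq_right hax
          have hmax : max a x = a := max_eq_left hax
          exact (sign_transfer hFcont hax
            (fun t h1 h2 => hFne t (by rw [hmin]; exact h1) (by rw [hmax]; exact h2))).2 ha
      exact ⟨hG1, hG2, hCh1⟩

end Main

end Stmt4Aux

/-- Interlacing of the zeros of `R_n` and `R_{n+1}`: if for each `n ≥ 1` the zeros of `R_n`
are `e^{i θ_{n,j}}`, `j = 1, …, n`, with `0 < θ_{n,1} < ⋯ < θ_{n,n} < 2π`, then for each
`n ≥ 1` one has `0 < θ_{n+1,1} < θ_{n,1} < θ_{n+1,2} < ⋯ < θ_{n,n} < θ_{n+1,n+1} < 2π`. -/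
theorem stmt4 (c d : ℕ → ℝ) (hd : IsPositiveChainSeq fun n => d (n + 1))
    (θ : (n : ℕ) → Fin n → ℝ)
    (hmono : ∀ n, StrictMono (θ n))
    (hrange : ∀ n, ∀ j : Fin n, 0 < θ n j ∧ θ n j < 2 * Real.pi)
    (hroots : ∀ n, 1 ≤ n → ∀ z : ℂ,
      (Rpoly c d n).eval z = 0 ↔ ∃ j : Fin n, z = Complex.exp (Complex.I * (θ n j : ℂ))) :
    ∀ n, 1 ≤ n → ∀ j : Fin n,
      θ (n + 1) j.castSucc < θ n j ∧ θ n j < θ (n + 1) j.succ := by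
  obtain ⟨g, hg0, hg01, hg1, hdg⟩ := hd
  have hdg' : ∀ m, 1 ≤ m → d (m+1) = (1 - g (m-1)) * g m := fun m hm => hdg m hm
  intro n hn j
  have hCh : Stmt4Aux.ChainP θ n :=
    (Stmt4Aux.master hmono hrange hroots hg0 hg01 hg1 hdg' n).2.2
  have hjn : (j:ℕ) < n := j.isLt
  have h1 := hCh (j:ℕ) (by omega)
  have h2 := hCh ((j:ℕ)+1) (by omega)
  have hpts : Stmt4Aux.pts θ n ((j:ℕ)+1) = θ n j := by
    rw [Stmt4Aux.pts_mid θ (by omega) (by omega)]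
    exact congrArg _ (Fin.ext (by simp))
  have hc1 : θ (n+1) j.castSucc = θ (n+1) ⟨(j:ℕ), by omega⟩ :=
    congrArg _ (Fin.ext (by simp))
  have hc2 : θ (n+1) j.succ = θ (n+1) ⟨(j:ℕ)+1, by omega⟩ :=
    congrArg _ (Fin.ext (by simp))
  constructor
  · rw [hc1]
    have := h1.2
    rwa [hpts] at this
  · rw [hc2]
    have := h2.1
    rwa [hpts] at this
end

section
/- Define V_n(z) = R_n'(z) R_{n-1}(z) - R_{n-1}'(z) R_n(z) for n ≥ 1. Then for every n ≥ 1 and every zero z_{n,j} of R_n, the complex number z_{n,j}^{-(n-2)} (z_{n,j} - 1)^{-1} V_n(z_{n,j}) is real and strictly positive. -/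
open Polynomial MeasureTheory Finset
open scoped ComplexConjugate

/-!
Christoffel–Darboux on the unit circle. Write `Ř_n(u) = conj (R_n (conj u))`. The recurrence,
together with `(1 + i c) + (1 - i c) = 2`, gives the two-variable identity
`R_{n+1}(z) Ř_n(u) (u - 1) + Ř_{n+1}(u) R_n(z) (z - 1) = (z u - 1) G_n(z, u)`
for a kernel `G_n` obeying its own recurrence. On the diagonal `u = conj z` the kernel is real,
and completing squares with a parameter sequence `g` of `d_{n+2} = (1 - g_n) g_{n+1}` shows
`G_n(z, conj z) ≥ 2 (1 - g_n) |R_n(z)|²`, which is positive because consecutive `R_n` have no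
common zero.

At a zero `z` of `R_{n+1}` the identity at `u = conj z` forces `|z| = 1`, and its `z`-derivative
gives `R_{n+1}'(z) conj (R_n(z)) (conj z - 1) = conj z G_n(z, conj z)`. As `R_n` is self-inversive,
`conj (R_n(z)) = z^{-n} R_n(z)` on the circle, so `z^{1-n} (z - 1)⁻¹ R_{n+1}'(z) R_n(z)` equals
`G_n(z, conj z) / |z - 1|² > 0`.
-/

open scoped ComplexOrder
open Complex (I normSq)

namespace IsParamSeq

variable {d g : ℕ → ℝ}

lemma nonneg (h : IsParamSeq d g) : ∀ n, 0 ≤ g n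
  | 0 => h.1
  | n + 1 => (h.2.2.1 (n + 1) n.succ_pos).1.le

lemma lt_one (h : IsParamSeq d g) : ∀ n, g n < 1
  | 0 => h.2.1
  | n + 1 => (h.2.2.1 (n + 1) n.succ_pos).2

lemma apply_succ (h : IsParamSeq d g) (n : ℕ) : d (n + 1) = (1 - g n) * g (n + 1) :=
  h.2.2.2 (n + 1) n.succ_pos

lemma pos (h : IsParamSeq d g) (n : ℕ) : 0 < d (n + 1) := by
  rw [h.apply_succ]
  exact mul_pos (sub_pos.mpr (h.lt_one n)) (h.2.2.1 (n + 1) n.succ_pos).1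

end IsParamSeq

section Rpoly

variable {c d : ℕ → ℝ}

lemma Rpoly_add_two (n : ℕ) :
    Rpoly c d (n + 2) =
      (C (1 + I * c (n + 2)) * X + C (1 - I * c (n + 2))) * Rpoly c d (n + 1)
        - C (4 * (d (n + 2) : ℂ)) * X * Rpoly c d n :=
  rfl

lemma Rpoly_eval_add_two (n : ℕ) (z : ℂ) :
    (Rpoly c d (n + 2)).eval z =
      ((1 + I * c (n + 2)) * z + (1 - I * c (n + 2))) * (Rpoly c d (n + 1)).eval z
        - 4 * d (n + 2) * z * (Rpoly c d n).eval z := by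
  simp [Rpoly_add_two]

lemma one_sub_I_mul_ne_zero (x : ℝ) : 1 - I * x ≠ 0 := fun h => by
  simpa using congrArg Complex.re h

lemma Rpoly_eval_zero_ne_zero : ∀ n, (Rpoly c d n).eval 0 ≠ 0
  | 0 => by simp [Rpoly]
  | 1 => by simpa [Rpoly] using one_sub_I_mul_ne_zero (c 1)
  | n + 2 => by
    rw [Rpoly_eval_add_two]
    simpa using ⟨one_sub_I_mul_ne_zero (c (n + 2)), Rpoly_eval_zero_ne_zero (n + 1)⟩

lemma Rpoly_eval_ne_zero_of_eval_succ_eq_zero (hd : ∀ n, d (n + 2) ≠ 0) {z : ℂ} :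
    ∀ n, (Rpoly c d (n + 1)).eval z = 0 → (Rpoly c d n).eval z ≠ 0
  | 0, _, h₀ => by simp [Rpoly] at h₀
  | n + 1, h₂, h₁ => by
    have hz : z ≠ 0 := by
      rintro rfl
      exact Rpoly_eval_zero_ne_zero _ h₁
    rw [Rpoly_eval_add_two, h₁] at h₂
    exact Rpoly_eval_ne_zero_of_eval_succ_eq_zero hd n h₁ (by simpa [hd, hz] using h₂)

lemma pow_mul_conj_Rpoly_eval {w : ℂ} (hw : conj w * w = 1) :
    ∀ n, w ^ n * conj ((Rpoly c d n).eval w) = (Rpoly c d n).eval w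
  | 0 => by simp [Rpoly]
  | 1 => by
    simp only [Rpoly, eval_add, eval_mul, eval_C, eval_X, pow_one]
    simp only [map_add, map_sub, map_mul, map_one, Complex.conj_I, Complex.conj_ofReal]
    linear_combination (1 - I * c 1) * hw
  | n + 2 => by
    have h₀ := pow_mul_conj_Rpoly_eval hw n
    have h₁ := pow_mul_conj_Rpoly_eval hw (n + 1)
    rw [Rpoly_eval_add_two]
    simp only [map_sub, map_add, map_mul, map_ofNat, map_one, Complex.conj_I, Complex.conj_ofReal]
    linear_combination ((1 - I * c (n + 2)) * conj w * w + (1 + I * c (n + 2)) * w) * h₁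
      - 4 * d (n + 2) * conj w * w ^ 2 * h₀
      + ((1 - I * c (n + 2)) * (Rpoly c d (n + 1)).eval w
        - 4 * d (n + 2) * w * (Rpoly c d n).eval w) * hw

end Rpoly

section Kernel

variable (c d : ℕ → ℝ) (w : ℂ)

/-- `cdKernel c d w n` is the polynomial `G_n(·, conj w)`. -/
noncomputable def cdKernel : ℕ → ℂ[X]
  | 0 => C 2
  | n + 1 =>
      C (2 * conj ((Rpoly c d (n + 1)).eval w)) * Rpoly c d (n + 1)
        - C (4 * (d (n + 2) : ℂ)) * (C (conj ((Rpoly c d (n + 1)).eval w)) * Rpoly c d n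
          + C (conj ((Rpoly c d n).eval w)) * Rpoly c d (n + 1))
        + C (4 * (d (n + 2) : ℂ)) * cdKernel n

theorem cdKernel_spec : ∀ n,
    C (conj ((Rpoly c d n).eval w) * (conj w - 1)) * Rpoly c d (n + 1)
      + C (conj ((Rpoly c d (n + 1)).eval w)) * (X - 1) * Rpoly c d n
      = (C (conj w) * X - 1) * cdKernel c d w n
  | 0 => by
    simp only [Rpoly, cdKernel, eval_one, eval_add, eval_mul, eval_C, eval_X]
    simp only [map_one, map_add, map_sub, map_mul, map_ofNat, Complex.conj_I, Complex.conj_ofReal,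
      map_neg]
    ring
  | n + 1 => by
    have ih := cdKernel_spec n
    rw [Rpoly_eval_add_two, Rpoly_add_two, cdKernel]
    simp only [map_one, map_add, map_sub, map_mul, map_ofNat, Complex.conj_I, Complex.conj_ofReal,
      map_neg] at ih ⊢
    linear_combination 4 * C (d (n + 2) : ℂ) * ih

variable {c d g : ℕ → ℝ} {w : ℂ}

theorem two_mul_normSq_le_cdKernel_eval (hg : IsParamSeq (fun n => d (n + 1)) g) :
    ∀ n, ((2 * (1 - g n) * normSq ((Rpoly c d n).eval w) : ℝ) : ℂ) ≤
      (cdKernel c d w n).eval w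
  | 0 => by
    simpa [Rpoly, cdKernel] using hg.nonneg 0
  | n + 1 => by
    have ih := two_mul_normSq_le_cdKernel_eval hg n
    set R₀ := (Rpoly c d n).eval w
    set R₁ := (Rpoly c d (n + 1)).eval w
    have hd : (d (n + 2) : ℂ) = (1 - g n) * g (n + 1) := by exact_mod_cast hg.apply_succ n
    have key : (cdKernel c d w (n + 1)).eval w - ((2 * (1 - g (n + 1)) * normSq R₁ : ℝ) : ℂ) =
        ((2 * g (n + 1) * normSq (R₁ - 2 * (1 - g n) * R₀) : ℝ) : ℂ) +
          4 * d (n + 2) *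
            ((cdKernel c d w n).eval w - ((2 * (1 - g n) * normSq R₀ : ℝ) : ℂ)) := by
      simp only [cdKernel, eval_add, eval_sub, eval_mul, eval_C]
      push_cast
      simp only [← Complex.mul_conj, map_sub, map_mul, map_ofNat, map_one, Complex.conj_ofReal]
      linear_combination
        (8 * (1 - g n) * R₀ * conj R₀ - 4 * (conj R₁ * R₀ + conj R₀ * R₁)) * hd
    rw [← sub_nonneg, key]
    have hd0 : (0 : ℝ) ≤ 4 * d (n + 2) := by linarith [hg.pos n]
    have hsq : (0 : ℝ) ≤ 2 * g (n + 1) * normSq (R₁ - 2 * (1 - g n) * R₀) :=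
      mul_nonneg (by linarith [hg.nonneg (n + 1)]) (Complex.normSq_nonneg _)
    exact add_nonneg (by exact_mod_cast hsq)
      (mul_nonneg (by exact_mod_cast hd0) (sub_nonneg.mpr ih))

theorem cdKernel_eval_pos (hg : IsParamSeq (fun n => d (n + 1)) g) {n : ℕ}
    (hR : (Rpoly c d n).eval w ≠ 0) : 0 < (cdKernel c d w n).eval w := by
  refine lt_of_lt_of_le ?_ (two_mul_normSq_le_cdKernel_eval hg n)
  exact_mod_cast mul_pos (mul_pos two_pos (sub_pos.mpr (hg.lt_one n))) (Complex.normSq_pos.mpr hR)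

theorem conj_mul_self_eq_one_of_eval_eq_zero {n : ℕ} (hG : (cdKernel c d w n).eval w ≠ 0)
    (hR : (Rpoly c d (n + 1)).eval w = 0) : conj w * w = 1 := by
  have h := congrArg (eval w) (cdKernel_spec c d w n)
  simp only [eval_add, eval_mul, eval_C, eval_sub, eval_X, eval_one, hR, map_zero] at h
  simpa [hG, sub_eq_zero] using h.symm

theorem derivative_eval_of_eval_eq_zero {n : ℕ} (hw : conj w * w = 1)
    (hR : (Rpoly c d (n + 1)).eval w = 0) :
    conj ((Rpoly c d n).eval w) * (conj w - 1) * (derivative (Rpoly c d (n + 1))).eval w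
      = conj w * (cdKernel c d w n).eval w := by
  have h := congrArg (fun p => (derivative p).eval w) (cdKernel_spec c d w n)
  simp only [derivative_add, derivative_mul, derivative_C, derivative_sub, derivative_X,
    derivative_one, eval_add, eval_mul, eval_C, eval_sub, eval_X, eval_one, eval_zero, hR,
    map_zero, hw] at h
  linear_combination h

end Kernel

section Root

variable {c d g : ℕ → ℝ} {z : ℂ} {m : ℕ}

theorem cdKernel_eval_pos_of_root (hg : IsParamSeq (fun n => d (n + 1)) g)
    (hz : (Rpoly c d (m + 1)).eval z = 0) : 0 < (cdKernel c d z m).eval z :=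
  cdKernel_eval_pos hg
    (Rpoly_eval_ne_zero_of_eval_succ_eq_zero (fun k => (hg.pos k).ne') m hz)

theorem conj_mul_self_eq_one_of_root (hg : IsParamSeq (fun n => d (n + 1)) g)
    (hz : (Rpoly c d (m + 1)).eval z = 0) : conj z * z = 1 :=
  conj_mul_self_eq_one_of_eval_eq_zero (cdKernel_eval_pos_of_root hg hz).ne' hz

theorem ne_one_of_root (hg : IsParamSeq (fun n => d (n + 1)) g)
    (hz : (Rpoly c d (m + 1)).eval z = 0) : z ≠ 1 := by
  rintro rfl
  have h := derivative_eval_of_eval_eq_zero (conj_mul_self_eq_one_of_root hg hz) hz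
  simp only [map_one, sub_self, mul_zero, zero_mul, one_mul] at h
  exact (cdKernel_eval_pos_of_root hg hz).ne' h.symm

theorem eval_mul_derivative_eval_of_root (hg : IsParamSeq (fun n => d (n + 1)) g)
    (hz : (Rpoly c d (m + 1)).eval z = 0) :
    (Rpoly c d m).eval z * (1 - z) * (derivative (Rpoly c d (m + 1))).eval z
      = z ^ m * (cdKernel c d z m).eval z := by
  have hunit := conj_mul_self_eq_one_of_root hg hz
  linear_combination z ^ (m + 1) * derivative_eval_of_eval_eq_zero hunit hz
    - (1 - z) * (derivative (Rpoly c d (m + 1))).eval z * pow_mul_conj_Rpoly_eval hunit m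
    + z ^ m * ((cdKernel c d z m).eval z
      - conj ((Rpoly c d m).eval z) * (derivative (Rpoly c d (m + 1))).eval z) * hunit

theorem root_wronskian_eq_cdKernel_eval_div_normSq (hg : IsParamSeq (fun n => d (n + 1)) g)
    (hz : (Rpoly c d (m + 1)).eval z = 0) :
    z ^ (-((m + 1 : ℕ) : ℤ) + 2) * (z - 1)⁻¹ *
        ((derivative (Rpoly c d (m + 1))).eval z * (Rpoly c d m).eval z)
      = (cdKernel c d z m).eval z * ((normSq (z - 1))⁻¹ : ℝ) := by
  have hunit := conj_mul_self_eq_one_of_root hg hz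
  have hz0 : z ≠ 0 := right_ne_zero_of_mul_eq_one hunit
  have hz1 : z - 1 ≠ 0 := sub_ne_zero.mpr (ne_one_of_root hg hz)
  have hN : (normSq (z - 1) : ℂ) ≠ 0 := by exact_mod_cast Complex.normSq_pos.mpr hz1 |>.ne'
  have hNz : (normSq (z - 1) : ℂ) * z = (z - 1) * (1 - z) := by
    rw [← Complex.mul_conj, map_sub, map_one]
    linear_combination (z - 1) * hunit
  have hpow : z ^ (-((m + 1 : ℕ) : ℤ) + 2) = z / z ^ m := by
    rw [zpow_add₀ hz0, zpow_neg, zpow_natCast]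
    field_simp
    ring
  rw [hpow, Complex.ofReal_inv]
  field_simp
  linear_combination (z - 1) * eval_mul_derivative_eval_of_root hg hz
    + (derivative (Rpoly c d (m + 1))).eval z * (Rpoly c d m).eval z * hNz

end Root

/-- With `V_n = R_n' R_{n-1} - R_{n-1}' R_n`, for every `n ≥ 1` and every zero `z` of `R_n`
the number `z^{-(n-2)} (z-1)^{-1} V_n(z)` is real and strictly positive. -/
theorem stmt5 (c d : ℕ → ℝ) (hd : IsPositiveChainSeq fun n => d (n + 1)) :
    ∀ n, 1 ≤ n → ∀ z : ℂ, (Rpoly c d n).eval z = 0 →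
      ∃ r : ℝ, 0 < r ∧
        (r : ℂ) = z ^ (-(n : ℤ) + 2) * (z - 1)⁻¹ *
          ((Polynomial.derivative (Rpoly c d n)).eval z * (Rpoly c d (n - 1)).eval z -
            (Polynomial.derivative (Rpoly c d (n - 1))).eval z * (Rpoly c d n).eval z) := by
  obtain ⟨g, hg⟩ := hd
  rintro n hn z hz
  obtain ⟨m, rfl⟩ := Nat.exists_eq_add_of_le' hn
  have hN : 0 < normSq (z - 1) := Complex.normSq_pos.mpr (sub_ne_zero.mpr (ne_one_of_root hg hz))
  obtain ⟨r, hr, hrG⟩ := RCLike.pos_iff_exists_ofReal.mp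
    (mul_pos (cdKernel_eval_pos_of_root hg hz) (Complex.zero_lt_real.mpr (inv_pos.mpr hN)))
  refine ⟨r, hr, hrG.trans ?_⟩
  rw [Nat.add_sub_cancel, hz, mul_zero, sub_zero, root_wronskian_eq_cdKernel_eval_div_normSq hg hz]
end

section
/- One has R_n(1) ≠ 0 for all n ≥ 0, the numbers 𝔪_n = 1 - R_{n+1}(1)/(2 R_n(1)) are real with 𝔪_0 = 0 and 0 < 𝔪_n < 1 for n ≥ 1, and (1 - 𝔪_{n-1}) 𝔪_n = d_{n+1} for all n ≥ 1; that is, {𝔪_n}_{n≥0} is the minimal parameter sequence of the positive chain sequence {d_{n+1}}_{n≥1}. -/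
open Polynomial MeasureTheory Finset
open scoped ComplexConjugate

noncomputable def mseq (d : ℕ → ℝ) : ℕ → ℝ
  | 0 => 0
  | n + 1 => d (n + 2) / (1 - mseq d n)

noncomputable def rseq (d : ℕ → ℝ) : ℕ → ℝ
  | 0 => 1
  | n + 1 => 2 * (1 - mseq d n) * rseq d n

/-- `R_n(1) ≠ 0` for all `n ≥ 0`, the numbers `𝔪_n = 1 - R_{n+1}(1)/(2 R_n(1))` are real
with `𝔪_0 = 0` and `0 < 𝔪_n < 1` for `n ≥ 1`, and `(1 - 𝔪_{n-1}) 𝔪_n = d_{n+1}` for `n ≥ 1`;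
i.e. `{𝔪_n}` is the minimal parameter sequence of the positive chain sequence `{d_{n+1}}`. -/
theorem stmt6 (c d : ℕ → ℝ) (hd : IsPositiveChainSeq fun n => d (n + 1)) :
    (∀ n, (Rpoly c d n).eval 1 ≠ 0) ∧
    ∃ m : ℕ → ℝ,
      (∀ n, (m n : ℂ) = 1 - (Rpoly c d (n + 1)).eval 1 / (2 * (Rpoly c d n).eval 1)) ∧
      m 0 = 0 ∧
      (∀ n, 1 ≤ n → 0 < m n ∧ m n < 1) ∧
      (∀ n, 1 ≤ n → (1 - m (n - 1)) * m n = d (n + 1)) ∧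
      IsParamSeq (fun n => d (n + 1)) m := by
  obtain ⟨g, hg0, hg0', hgpos, hgd⟩ := hd
  have hglt : ∀ n, g n < 1 := by
    intro n; cases n with
    | zero => exact hg0'
    | succ k => exact (hgpos (k+1) (by omega)).2
  have hgnn : ∀ n, 0 ≤ g n := by
    intro n; cases n with
    | zero => exact hg0
    | succ k => exact (hgpos (k+1) (by omega)).1.le
  have hdeq : ∀ n, d (n + 2) = (1 - g n) * g (n + 1) := fun n => hgd (n+1) (by omega)
  have hdpos : ∀ n, 0 < d (n + 2) := by
    intro n; rw [hdeq n]
    exact mul_pos (by linarith [hglt n]) (hgpos (n+1) (by omega)).1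
  have hb : ∀ n, 0 ≤ mseq d n ∧ mseq d n ≤ g n := by
    intro n; induction n with
    | zero => simp [mseq, hg0]
    | succ n ih =>
      have hm1 : mseq d n < 1 := lt_of_le_of_lt ih.2 (hglt n)
      constructor
      · exact div_nonneg (hdpos n).le (by linarith)
      · show d (n+2) / (1 - mseq d n) ≤ g (n+1)
        rw [div_le_iff₀ (by linarith), hdeq n]
        nlinarith [hgnn (n+1), ih.2]
  have hmlt : ∀ n, mseq d n < 1 := fun n => lt_of_le_of_lt (hb n).2 (hglt n)
  have hmpos : ∀ n, 1 ≤ n → 0 < mseq d n := by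
    intro n hn
    cases n with
    | zero => omega
    | succ k => exact div_pos (hdpos k) (by linarith [hmlt k])
  have hchain : ∀ n, (1 - mseq d n) * mseq d (n+1) = d (n+2) := by
    intro n
    show (1 - mseq d n) * (d (n+2) / (1 - mseq d n)) = d (n+2)
    rw [mul_div_cancel₀ _ (by linarith [hmlt n] : (1 : ℝ) - mseq d n ≠ 0)]
  have hrpos : ∀ n, 0 < rseq d n := by
    intro n; induction n with
    | zero => norm_num [rseq]
    | succ n ih =>
      show 0 < 2 * (1 - mseq d n) * rseq d n
      nlinarith [hmlt n]
  have hrrec : ∀ n, rseq d (n+2) = 2 * rseq d (n+1) - 4 * d (n+2) * rseq d n := by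
    intro n
    show 2 * (1 - mseq d (n+1)) * rseq d (n+1)
        = 2 * rseq d (n+1) - 4 * d (n+2) * rseq d n
    have h1 : rseq d (n+1) = 2 * (1 - mseq d n) * rseq d n := rfl
    rw [h1]
    linear_combination (-4 * rseq d n) * hchain n
  have key : ∀ n, (Rpoly c d n).eval 1 = (rseq d n : ℂ) ∧
      (Rpoly c d (n+1)).eval 1 = (rseq d (n+1) : ℂ) := by
    intro n; induction n with
    | zero =>
      constructor
      · simp [Rpoly, rseq]
      · simp only [Rpoly, rseq, mseq, eval_add, eval_mul, eval_C, eval_X]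
        push_cast; ring
    | succ n ih =>
      refine ⟨ih.2, ?_⟩
      show ((C (1 + Complex.I * (c (n + 2) : ℂ)) * X + C (1 - Complex.I * (c (n + 2) : ℂ))) *
          Rpoly c d (n + 1) - C (4 * (d (n + 2) : ℂ)) * X * Rpoly c d n).eval 1
          = (rseq d (n+2) : ℂ)
      rw [hrrec n]
      simp only [eval_sub, eval_mul, eval_add, eval_C, eval_X, ih.1, ih.2]
      push_cast; ring
  have hRval : ∀ n, (Rpoly c d n).eval 1 = (rseq d n : ℂ) := fun n => (key n).1
  have hRne : ∀ n, (Rpoly c d n).eval 1 ≠ 0 := by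
    intro n; rw [hRval n]
    exact_mod_cast (hrpos n).ne'
  refine ⟨hRne, mseq d, ?_, rfl, fun n hn => ⟨hmpos n hn, hmlt n⟩, ?_, ?_⟩
  · intro n
    rw [hRval n, hRval (n+1)]
    have h1 : (rseq d (n+1) : ℂ) = 2 * (1 - (mseq d n : ℂ)) * (rseq d n : ℂ) := by
      show ((2 * (1 - mseq d n) * rseq d n : ℝ) : ℂ) = _
      push_cast; ring
    rw [h1]
    have hne : ((rseq d n : ℂ)) ≠ 0 := by exact_mod_cast (hrpos n).ne'
    field_simp
    ring
  · intro n hn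
    cases n with
    | zero => omega
    | succ k => exact hchain k
  · refine ⟨?_, ?_, fun n hn => ⟨hmpos n hn, hmlt n⟩, ?_⟩
    · norm_num [mseq]
    · norm_num [mseq]
    · intro n hn
      cases n with
      | zero => omega
      | succ k => exact (hchain k).symm
end

section
/- Define P_0(z) = 1 and P_n(z) = z S_{n-1}(z) - ρ_{n-1} S_{n-1}^*(z) for n ≥ 1. Then P_n(z) = (S_n(z) - ρ_n S_n^*(z))/(1 + ρ_n α_{n-1}) for all n ≥ 0, and for all n ≥ 1 the monic three term recurrence P_{n+1}(z) = (z + ρ_n/ρ_{n-1}) P_n(z) - (1 - conj(ρ_{n-1} α_{n-1}))·(1 + ρ_{n-1} α_{n-2})·z·P_{n-1}(z) holds. -/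
/-!
Orthogonality forces the Szegő recurrence `S_{n+1} = z S_n - conj(α_n) S_n^*`: the difference
`S_{n+1} - z S_n - S_{n+1}(0) S_n^*` vanishes at `0` and is orthogonal to `z, …, z^n`, so it is
`z t` with `deg t < n` and `t` orthogonal to `1, …, z^{n-1}`, hence zero. Reversing gives
`S_n^* = S_{n+1}^* - conj(S_{n+1}(0)) z S_n`, an orthogonal decomposition, so
`‖S_{n+1}‖² = (1 - |α_n|²) ‖S_n‖²` and `|α_n| < 1`. Then the Möbius maps defining `ρ_n`
preserve the unit circle, and both claims are polynomial identities in `S_n, S_n^*` that follow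
from the Szegő recurrence and `ρ_{n+1} (1 - ρ_n α_n) = ρ_n - conj(α_n)`.
-/

open Polynomial MeasureTheory Finset
open scoped ComplexConjugate

/-- A measure on `ℂ` is supported on the unit circle. -/
def IsMeasureOnCircle (μ : MeasureTheory.Measure ℂ) : Prop :=
  μ {z : ℂ | ‖z‖ ≠ 1} = 0

/-- A measure is nontrivial: its support is infinite, i.e. it is not carried
by any finite set. -/
def IsNontrivialMeasure (μ : MeasureTheory.Measure ℂ) : Prop :=
  ∀ s : Finset ℂ, μ (↑s : Set ℂ)ᶜ ≠ 0

/-- `S` is the sequence of monic orthogonal polynomials (OPUC) of the measure `μ`: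
`S_n` is monic of degree `n` and `∫ conj(S_m(ζ)) S_n(ζ) dμ(ζ) = 0` for `m ≠ n`. -/
def IsMonicOPUC (μ : MeasureTheory.Measure ℂ) (S : ℕ → Polynomial ℂ) : Prop :=
  (∀ n, (S n).Monic ∧ (S n).natDegree = n) ∧
  ∀ m n, m ≠ n → ∫ z : ℂ, conj ((S m).eval z) * ((S n).eval z) ∂μ = 0

/-- The reversed (conjugate reciprocal) polynomial `p^*(z) = z^n conj(p(1/conj z))`
of a polynomial `p` of degree `n`. -/
noncomputable def starPoly (p : Polynomial ℂ) : Polynomial ℂ :=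
  (p.map (starRingEnd ℂ)).reverse

lemma Complex.infinite_setOf_norm_eq_one : {z : ℂ | ‖z‖ = 1}.Infinite := by
  have h := (isPreconnected_sphere (rank_real_complex ▸ Nat.one_lt_ofNat) (0 : ℂ) 1)
    |>.infinite_of_nontrivial ⟨1, by simp, -1, by simp, by norm_num⟩
  simpa [Metric.sphere] using h

lemma Polynomial.eq_of_eval_eq_of_norm_eq_one {p q : ℂ[X]}
    (h : ∀ z : ℂ, ‖z‖ = 1 → p.eval z = q.eval z) : p = q :=
  eq_of_infinite_eval_eq p q (Complex.infinite_setOf_norm_eq_one.mono h)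

lemma starPoly_eval_of_norm_eq_one (p : ℂ[X]) {z : ℂ} (hz : ‖z‖ = 1) :
    (starPoly p).eval z = z ^ p.natDegree * conj (p.eval z) := by
  have hz0 : z ≠ 0 := norm_ne_zero_iff.mp (by simp [hz])
  have := invertibleOfNonzero (inv_ne_zero hz0)
  have h := eval₂_reverse_mul_pow (RingHom.id ℂ) z⁻¹ (p.map (starRingEnd ℂ))
  rw [invOf_eq_inv, inv_inv, natDegree_map_eq_of_injective (RingHom.injective _),
    Complex.inv_eq_conj hz] at h
  change (starPoly p).eval z * conj z ^ p.natDegree = (p.map (starRingEnd ℂ)).eval (conj z) at h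
  rw [eval_map_apply, ← Complex.inv_eq_conj hz, inv_pow, ← div_eq_mul_inv,
    div_eq_iff (pow_ne_zero _ hz0)] at h
  rw [h, mul_comm]

lemma starPoly_one : starPoly 1 = 1 := by
  rw [starPoly, Polynomial.map_one, ← C_1, reverse_C]

lemma natDegree_starPoly_le (p : ℂ[X]) : (starPoly p).natDegree ≤ p.natDegree :=
  (reverse_natDegree_le _).trans (natDegree_map_eq_of_injective (RingHom.injective _) p).le

lemma IsMeasureOnCircle.ae_norm_eq_one {μ : Measure ℂ} (hcirc : IsMeasureOnCircle μ) :
    ∀ᵐ z ∂μ, ‖z‖ = 1 :=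
  hcirc

lemma IsMeasureOnCircle.integrable_of_continuous {μ : Measure ℂ} [IsFiniteMeasure μ]
    (hcirc : IsMeasureOnCircle μ) {E : Type*} [NormedAddCommGroup E] {f : ℂ → E}
    (hf : Continuous f) : Integrable f μ := by
  obtain ⟨B, hB⟩ := (isCompact_sphere (0 : ℂ) 1).exists_bound_of_continuousOn hf.continuousOn
  refine .of_bound hf.aestronglyMeasurable B ?_
  filter_upwards [hcirc.ae_norm_eq_one] with z hz
  exact hB z (by simpa using hz)

noncomputable def polyInner (μ : Measure ℂ) (p q : ℂ[X]) : ℂ :=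
  ∫ z, conj (p.eval z) * q.eval z ∂μ

noncomputable def polyNormSq (μ : Measure ℂ) (p : ℂ[X]) : ℝ :=
  ∫ z, ‖p.eval z‖ ^ 2 ∂μ

section PolyInner

variable {μ : Measure ℂ}

lemma polyInner_conj_symm (p q : ℂ[X]) : conj (polyInner μ p q) = polyInner μ q p := by
  rw [polyInner, polyInner, ← integral_conj]
  simp_rw [map_mul, Complex.conj_conj, mul_comm]

lemma polyInner_C_mul_left (c : ℂ) (p q : ℂ[X]) :
    polyInner μ (C c * p) q = conj c * polyInner μ p q := by
  simp_rw [polyInner, ← integral_const_mul, eval_mul, eval_C, map_mul, mul_assoc]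

lemma polyInner_C_mul_right (c : ℂ) (p q : ℂ[X]) :
    polyInner μ p (C c * q) = c * polyInner μ p q := by
  simp_rw [polyInner, ← integral_const_mul, eval_mul, eval_C, mul_left_comm]

lemma polyInner_self (p : ℂ[X]) : polyInner μ p p = polyNormSq μ p := by
  simp_rw [polyInner, polyNormSq, Complex.conj_mul', ← integral_complex_ofReal]
  push_cast; rfl

lemma polyNormSq_C_mul (c : ℂ) (p : ℂ[X]) :
    polyNormSq μ (C c * p) = ‖c‖ ^ 2 * polyNormSq μ p := by
  simp_rw [polyNormSq, ← integral_const_mul, eval_mul, eval_C, norm_mul, mul_pow]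

variable (hcirc : IsMeasureOnCircle μ)
include hcirc

lemma polyInner_X_mul_X_mul (p q : ℂ[X]) : polyInner μ (X * p) (X * q) = polyInner μ p q := by
  refine integral_congr_ae ?_
  filter_upwards [hcirc.ae_norm_eq_one] with z hz
  simp only [eval_mul, eval_X, map_mul]
  have hzz : conj z * z = 1 := by simp [Complex.conj_mul', hz]
  linear_combination (conj (p.eval z) * q.eval z) * hzz

lemma polyInner_X_pow_starPoly (p : ℂ[X]) {j : ℕ} (hj : j ≤ p.natDegree) :
    polyInner μ (X ^ j) (starPoly p) = conj (polyInner μ (X ^ (p.natDegree - j)) p) := by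
  rw [polyInner, polyInner, ← integral_conj]
  refine integral_congr_ae ?_
  filter_upwards [hcirc.ae_norm_eq_one] with z hz
  have hzz : conj z ^ j * z ^ j = 1 := by simp [← mul_pow, Complex.conj_mul', hz]
  simp only [starPoly_eval_of_norm_eq_one p hz, eval_pow, eval_X, map_mul, map_pow,
    Complex.conj_conj]
  rw [← Nat.sub_add_cancel hj, pow_add, Nat.add_sub_cancel]
  linear_combination (z ^ (p.natDegree - j) * conj (p.eval z)) * hzz

lemma polyNormSq_X_mul (p : ℂ[X]) : polyNormSq μ (X * p) = polyNormSq μ p := by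
  refine integral_congr_ae ?_
  filter_upwards [hcirc.ae_norm_eq_one] with z hz
  simp [hz]

lemma polyNormSq_starPoly (p : ℂ[X]) : polyNormSq μ (starPoly p) = polyNormSq μ p := by
  refine integral_congr_ae ?_
  filter_upwards [hcirc.ae_norm_eq_one] with z hz
  simp [starPoly_eval_of_norm_eq_one p hz, hz]

variable [IsFiniteMeasure μ]

lemma integrable_conj_eval_mul_eval (p q : ℂ[X]) :
    Integrable (fun z => conj (p.eval z) * q.eval z) μ :=
  hcirc.integrable_of_continuous (by fun_prop)

lemma polyInner_add_left (p q r : ℂ[X]) :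
    polyInner μ (p + q) r = polyInner μ p r + polyInner μ q r := by
  rw [polyInner, polyInner, polyInner,
    ← integral_add (integrable_conj_eval_mul_eval hcirc p r)
      (integrable_conj_eval_mul_eval hcirc q r)]
  simp_rw [eval_add, map_add, add_mul]

lemma polyInner_add_right (p q r : ℂ[X]) :
    polyInner μ p (q + r) = polyInner μ p q + polyInner μ p r := by
  rw [polyInner, polyInner, polyInner,
    ← integral_add (integrable_conj_eval_mul_eval hcirc p q)
      (integrable_conj_eval_mul_eval hcirc p r)]
  simp_rw [eval_add, mul_add]

lemma polyInner_sub_right (p q r : ℂ[X]) :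
    polyInner μ p (q - r) = polyInner μ p q - polyInner μ p r := by
  rw [eq_sub_iff_add_eq, ← polyInner_add_right hcirc, sub_add_cancel]

lemma polyInner_sum_left {ι : Type*} (s : Finset ι) (f : ι → ℂ[X]) (q : ℂ[X]) :
    polyInner μ (∑ i ∈ s, f i) q = ∑ i ∈ s, polyInner μ (f i) q := by
  simp_rw [polyInner, eval_finsetSum, map_sum, Finset.sum_mul]
  exact integral_finsetSum s fun i _ => integrable_conj_eval_mul_eval hcirc (f i) q

lemma polyInner_eq_zero_of_coeff_ne_zero {p q : ℂ[X]}
    (h : ∀ i, p.coeff i ≠ 0 → polyInner μ (X ^ i) q = 0) : polyInner μ p q = 0 := by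
  rw [as_sum_support_C_mul_X_pow p, polyInner_sum_left hcirc]
  refine Finset.sum_eq_zero fun i hi => ?_
  rw [polyInner_C_mul_left, h i (mem_support_iff.mp hi), mul_zero]

lemma polyNormSq_add_of_polyInner_eq_zero {p q : ℂ[X]} (h : polyInner μ p q = 0) :
    polyNormSq μ (p + q) = polyNormSq μ p + polyNormSq μ q := by
  have h' : polyInner μ q p = 0 := by rw [← polyInner_conj_symm, h, map_zero]
  apply Complex.ofReal_injective
  rw [Complex.ofReal_add, ← polyInner_self, ← polyInner_self, ← polyInner_self,
    polyInner_add_left hcirc, polyInner_add_right hcirc, polyInner_add_right hcirc, h, h']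
  ring

lemma polyNormSq_pos (hnt : IsNontrivialMeasure μ) {p : ℂ[X]} (hp : p ≠ 0) :
    0 < polyNormSq μ p := by
  rw [polyNormSq, integral_pos_iff_support_of_nonneg (fun z => by positivity)
    (hcirc.integrable_of_continuous (by fun_prop))]
  refine (pos_iff_ne_zero.mpr (hnt p.roots.toFinset)).trans_le (measure_mono fun z hz => ?_)
  simpa [Function.mem_support, hp] using hz

lemma eq_zero_of_polyInner_self_eq_zero (hnt : IsNontrivialMeasure μ) {p : ℂ[X]}
    (h : polyInner μ p p = 0) : p = 0 := by
  by_contra hp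
  rw [polyInner_self, Complex.ofReal_eq_zero] at h
  exact (polyNormSq_pos hcirc hnt hp).ne' h

end PolyInner

lemma Polynomial.Monic.degree_sub_lt_of_natDegree_eq {R : Type*} [Ring R] [Nontrivial R]
    {p q : R[X]} (hp : p.Monic) (hq : q.Monic) {n : ℕ} (hpn : p.natDegree = n)
    (hqn : q.natDegree = n) : (p - q).degree < n := by
  have hdeg : p.degree = q.degree := by
    rw [degree_eq_natDegree hp.ne_zero, degree_eq_natDegree hq.ne_zero, hpn, hqn]
  have h := degree_sub_lt_left hdeg hp.ne_zero (by rw [hp.leadingCoeff, hq.leadingCoeff])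
  rwa [degree_eq_natDegree hp.ne_zero, hpn] at h

namespace IsMonicOPUC

variable {μ : Measure ℂ} {S : ℕ → ℂ[X]} (hS : IsMonicOPUC μ S)
include hS

lemma monic (n : ℕ) : (S n).Monic := (hS.1 n).1

lemma natDegree_eq (n : ℕ) : (S n).natDegree = n := (hS.1 n).2

lemma polyInner_eq_zero {m n : ℕ} (hmn : m ≠ n) : polyInner μ (S m) (S n) = 0 := hS.2 m n hmn

variable [IsFiniteMeasure μ] (hcirc : IsMeasureOnCircle μ)
include hcirc

lemma polyInner_X_pow_eq_zero {j n : ℕ} (hjn : j < n) : polyInner μ (X ^ j) (S n) = 0 := by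
  induction j using Nat.strong_induction_on with
  | _ j ih =>
    have hlow := (monic_X_pow j).degree_sub_lt_of_natDegree_eq (hS.monic j) (natDegree_X_pow j)
      (hS.natDegree_eq j)
    have hdiff : polyInner μ (X ^ j - S j) (S n) = 0 :=
      polyInner_eq_zero_of_coeff_ne_zero hcirc fun i hi => by
        have hij : i < j := by exact_mod_cast (le_degree_of_ne_zero hi).trans_lt hlow
        exact ih i hij (hij.trans hjn)
    rw [← sub_add_cancel (X ^ j) (S j), polyInner_add_left hcirc, hdiff, zero_add]
    exact hS.polyInner_eq_zero hjn.ne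

lemma szego (hnt : IsNontrivialMeasure μ) (m : ℕ) :
    S (m + 1) = X * S m + C ((S (m + 1)).eval 0) * starPoly (S m) := by
  set e := (S (m + 1)).eval 0
  set r := S (m + 1) - X * S m - C e * starPoly (S m) with hr
  have hr0 : r.coeff 0 = 0 := by
    have : (starPoly (S m)).coeff 0 = 1 := by
      rw [starPoly, coeff_zero_reverse, ((hS.monic m).map _).leadingCoeff]
    rw [hr, coeff_sub, coeff_sub, coeff_X_mul_zero, coeff_C_mul, this, coeff_zero_eq_eval_zero]
    ring
  have hr_deg : r.degree < ↑(m + 1) := by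
    have h1 := (hS.monic (m + 1)).degree_sub_lt_of_natDegree_eq (monic_X.mul (hS.monic m))
      (hS.natDegree_eq (m + 1)) (by rw [natDegree_X_mul (hS.monic m).ne_zero, hS.natDegree_eq m])
    have h2 : (C e * starPoly (S m)).degree < ↑(m + 1) :=
      (degree_le_of_natDegree_le ((natDegree_C_mul_le _ _).trans
        ((natDegree_starPoly_le _).trans (hS.natDegree_eq m).le))).trans_lt
        (by exact_mod_cast m.lt_succ_self)
    exact (degree_sub_le _ _).trans_lt (max_lt h1 h2)
  obtain ⟨t, ht⟩ := X_dvd_iff.mpr hr0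
  have horth : ∀ i < m, polyInner μ (X ^ i) t = 0 := by
    intro i hi
    have hstar :=
      polyInner_X_pow_starPoly hcirc (S m) (j := i + 1) (by rw [hS.natDegree_eq m]; omega)
    rw [hS.natDegree_eq m, hS.polyInner_X_pow_eq_zero hcirc (by omega : m - (i + 1) < m)] at hstar
    calc polyInner μ (X ^ i) t = polyInner μ (X ^ (i + 1)) r := by
          rw [ht, pow_succ', polyInner_X_mul_X_mul hcirc]
      _ = polyInner μ (X ^ (i + 1)) (S (m + 1)) - polyInner μ (X ^ i) (S m)
          - e * polyInner μ (X ^ (i + 1)) (starPoly (S m)) := by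
          rw [hr, polyInner_sub_right hcirc, polyInner_sub_right hcirc, polyInner_C_mul_right,
            pow_succ', polyInner_X_mul_X_mul hcirc]
      _ = 0 := by
          rw [hstar, hS.polyInner_X_pow_eq_zero hcirc (by omega),
            hS.polyInner_X_pow_eq_zero hcirc hi]
          simp
  have ht0 : t = 0 := by
    refine eq_zero_of_polyInner_self_eq_zero hcirc hnt
      (polyInner_eq_zero_of_coeff_ne_zero hcirc fun i hi => horth i ?_)
    have : r.coeff (i + 1) ≠ 0 := by rwa [ht, coeff_X_mul]
    have : i + 1 < m + 1 := by exact_mod_cast (le_degree_of_ne_zero this).trans_lt hr_deg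
    omega
  rw [ht0, mul_zero, hr, sub_sub, sub_eq_zero] at ht
  exact ht

lemma starPoly_szego (hnt : IsNontrivialMeasure μ) (m : ℕ) :
    starPoly (S (m + 1)) = starPoly (S m) + C (conj ((S (m + 1)).eval 0)) * (X * S m) := by
  set e := (S (m + 1)).eval 0
  refine eq_of_eval_eq_of_norm_eq_one fun z hz => ?_
  have hzz : conj z * z = 1 := by simp [Complex.conj_mul', hz]
  have hzzm : conj z ^ m * z ^ m = 1 := by rw [← mul_pow, hzz, one_pow]
  have hSz : (S (m + 1)).eval z = z * (S m).eval z + e * (z ^ m * conj ((S m).eval z)) := by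
    simpa [starPoly_eval_of_norm_eq_one _ hz, hS.natDegree_eq m] using
      congrArg (eval z) (hS.szego hcirc hnt m)
  simp only [starPoly_eval_of_norm_eq_one _ hz, hS.natDegree_eq, hSz, eval_add, eval_mul,
    eval_C, eval_X, map_add, map_mul, map_pow, Complex.conj_conj]
  linear_combination (z ^ m * conj ((S m).eval z)) * hzz + (conj e * z * (S m).eval z) * hzzm

lemma polyInner_starPoly_X_mul (m : ℕ) : polyInner μ (starPoly (S (m + 1))) (X * S m) = 0 := by
  rw [← polyInner_conj_symm, map_eq_zero]
  refine polyInner_eq_zero_of_coeff_ne_zero hcirc fun i hi => ?_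
  obtain _ | k := i
  · exact absurd (coeff_X_mul_zero _) hi
  have hk := le_natDegree_of_ne_zero ((coeff_X_mul _ _).symm.trans_ne hi)
  rw [hS.natDegree_eq m] at hk
  rw [polyInner_X_pow_starPoly hcirc _ (by rw [hS.natDegree_eq _]; omega), hS.natDegree_eq _,
    hS.polyInner_X_pow_eq_zero hcirc (by omega), map_zero]

lemma norm_eval_zero_lt_one (hnt : IsNontrivialMeasure μ) (m : ℕ) :
    ‖(S (m + 1)).eval 0‖ < 1 := by
  set e := (S (m + 1)).eval 0
  have hsplit : starPoly (S m) = starPoly (S (m + 1)) + C (-conj e) * (X * S m) := by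
    rw [hS.starPoly_szego hcirc hnt m, map_neg]
    ring
  have hpyth := polyNormSq_add_of_polyInner_eq_zero hcirc (p := starPoly (S (m + 1)))
    (q := C (-conj e) * (X * S m))
    (by rw [polyInner_C_mul_right, hS.polyInner_starPoly_X_mul hcirc m, mul_zero])
  rw [← hsplit, polyNormSq_starPoly hcirc, polyNormSq_starPoly hcirc, polyNormSq_C_mul,
    polyNormSq_X_mul hcirc, norm_neg, Complex.norm_conj] at hpyth
  have hpos := polyNormSq_pos hcirc hnt (hS.monic (m + 1)).ne_zero
  have hpos' := polyNormSq_pos hcirc hnt (hS.monic m).ne_zero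
  refine (sq_lt_one_iff₀ (norm_nonneg e)).mp ?_
  nlinarith

end IsMonicOPUC

section Recurrence

lemma Complex.norm_sub_conj_div_one_sub_mul {r a : ℂ} (hr : ‖r‖ = 1) (ha : 1 - r * a ≠ 0) :
    ‖(r - conj a) / (1 - r * a)‖ = 1 := by
  have hrr : r * conj r = 1 := by simp [Complex.mul_conj', hr]
  have hnum : r - conj a = r * conj (1 - r * a) := by
    rw [map_sub, map_one, map_mul]
    linear_combination conj a * hrr
  rw [norm_div, hnum, norm_mul, hr, one_mul, Complex.norm_conj,
    div_self (norm_ne_zero_iff.mpr ha)]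

lemma one_sub_ne_zero_of_norm_lt_one {R : Type*} [SeminormedRing R] [NormOneClass R] {w : R}
    (hw : ‖w‖ < 1) : 1 - w ≠ 0 :=
  sub_ne_zero.mpr fun h => by simp [← h] at hw

lemma one_add_ne_zero_of_norm_lt_one {R : Type*} [SeminormedRing R] [NormOneClass R] {w : R}
    (hw : ‖w‖ < 1) : 1 + w ≠ 0 := by
  simpa using one_sub_ne_zero_of_norm_lt_one (w := -w) (by rwa [norm_neg])

lemma norm_eq_one_of_mobius_recurrence {A ρ : ℕ → ℂ} (hA : ∀ m, ‖A (m + 1)‖ < 1)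
    (h0 : ‖ρ 0‖ = 1)
    (hρ : ∀ m, ρ (m + 1) = (ρ m - conj (A (m + 1))) / (1 - ρ m * A (m + 1))) :
    ∀ n, ‖ρ n‖ = 1
  | 0 => h0
  | m + 1 => by
    have ih := norm_eq_one_of_mobius_recurrence hA h0 hρ m
    rw [hρ]
    exact Complex.norm_sub_conj_div_one_sub_mul ih
      (one_sub_ne_zero_of_norm_lt_one (by rw [norm_mul, ih, one_mul]; exact hA m))

variable {p q : ℂ[X]} {a r r' : ℂ}

lemma C_mul_X_mul_sub_C_mul_starPoly (hq : q = X * p - C (conj a) * starPoly p)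
    (hq_star : starPoly q = starPoly p - C a * (X * p)) (hr : r' * (1 - r * a) = r - conj a) :
    C (1 + r' * a) * (X * p - C r * starPoly p) = q - C r' * starPoly q := by
  have hrC := congrArg C hr
  simp only [map_mul, map_sub, map_one] at hrC
  rw [hq_star, hq, map_add, map_one, map_mul]
  linear_combination starPoly p * hrC

lemma X_mul_sub_C_mul_starPoly_three_term {p₀ : ℂ[X]} {d : ℂ}
    (hq : q = X * p - C (conj a) * starPoly p)
    (hq_star : starPoly q = starPoly p - C a * (X * p)) (hr : r' * (1 - r * a) = r - conj a)
    (hr_norm : ‖r‖ = 1) (hp₀ : C d * p₀ = p - C r * starPoly p) :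
    X * q - C r' * starPoly q = (X + C (r' / r)) * (X * p - C r * starPoly p) -
      C ((1 - conj (r * a)) * d) * X * p₀ := by
  have hrC := congrArg C hr
  have hcC := congrArg C (show r * conj r = 1 by simp [Complex.mul_conj', hr_norm])
  simp only [map_mul, map_sub, map_one] at hrC hcC
  rw [div_eq_mul_inv, Complex.inv_eq_conj hr_norm, hq_star, hq]
  simp only [map_mul, map_sub, map_one]
  linear_combination ((1 - C (conj r) * C (conj a)) * X) * hp₀ +
    (C (conj a) * X * starPoly p + C r' * starPoly p - X * p * (C r' * C a + 1)) * hcC -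
    (C (conj r) * X * p) * hrC

end Recurrence

/-- With `P_0 = 1` and `P_n(z) = z S_{n-1}(z) - ρ_{n-1} S_{n-1}^*(z)` for `n ≥ 1`, one has
`P_n = (S_n - ρ_n S_n^*)/(1 + ρ_n α_{n-1})` for all `n ≥ 0`, and for `n ≥ 1` the monic three
term recurrence
`P_{n+1} = (z + ρ_n/ρ_{n-1}) P_n - (1 - conj(ρ_{n-1} α_{n-1}))(1 + ρ_{n-1} α_{n-2}) z P_{n-1}`. -/
theorem stmt13 (μ : MeasureTheory.Measure ℂ)
    (hprob : MeasureTheory.IsProbabilityMeasure μ)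
    (hcirc : IsMeasureOnCircle μ) (hnt : IsNontrivialMeasure μ)
    (S : ℕ → Polynomial ℂ) (hS : IsMonicOPUC μ S)
    (A : ℕ → ℂ) (hA0 : A 0 = -1) (hA : ∀ n, 1 ≤ n → A n = -conj ((S n).eval 0))
    (ρ : ℕ → ℂ) (hρ0a : ‖ρ 0‖ = 1) (hρ0b : ρ 0 ≠ 1)
    (hρ : ∀ n, 1 ≤ n → ρ n = (ρ (n - 1) - conj (A n)) / (1 - ρ (n - 1) * A n))
    (P : ℕ → Polynomial ℂ) (hP0 : P 0 = 1)
    (hP : ∀ n, 1 ≤ n → P n = X * S (n - 1) - C (ρ (n - 1)) * starPoly (S (n - 1))) :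
    (∀ n, 1 + ρ n * A n ≠ 0 ∧
      P n = C (1 + ρ n * A n)⁻¹ * (S n - C (ρ n) * starPoly (S n))) ∧
    (∀ n, 1 ≤ n →
      P (n + 1) = (X + C (ρ n / ρ (n - 1))) * P n -
        C ((1 - conj (ρ (n - 1) * A n)) * (1 + ρ (n - 1) * A (n - 1))) * X * P (n - 1)) := by
  have hA' : ∀ m, A (m + 1) = -conj ((S (m + 1)).eval 0) := fun m => hA _ (Nat.le_add_left 1 m)
  have hα : ∀ m, ‖A (m + 1)‖ < 1 := fun m => by
    rw [hA', norm_neg, Complex.norm_conj]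
    exact hS.norm_eval_zero_lt_one hcirc hnt m
  have hszego : ∀ m, S (m + 1) = X * S m - C (conj (A (m + 1))) * starPoly (S m) := fun m => by
    rw [hA', map_neg, Complex.conj_conj, map_neg, neg_mul, sub_neg_eq_add]
    exact hS.szego hcirc hnt m
  have hszego_star : ∀ m, starPoly (S (m + 1)) = starPoly (S m) - C (A (m + 1)) * (X * S m) :=
    fun m => by
      rw [hA', map_neg, neg_mul, sub_neg_eq_add]
      exact hS.starPoly_szego hcirc hnt m
  have hρ_norm :=
    norm_eq_one_of_mobius_recurrence hα hρ0a fun m => hρ (m + 1) (Nat.le_add_left 1 m)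
  have hρα : ∀ k m, ‖ρ k * A (m + 1)‖ < 1 := fun k m => by
    rw [norm_mul, hρ_norm, one_mul]
    exact hα m
  have hρ_mul : ∀ m, ρ (m + 1) * (1 - ρ m * A (m + 1)) = ρ m - conj (A (m + 1)) := fun m => by
    rw [hρ _ (Nat.le_add_left 1 m), Nat.add_sub_cancel,
      div_mul_cancel₀ _ (one_sub_ne_zero_of_norm_lt_one (hρα m m))]
  have hden : ∀ n, 1 + ρ n * A n ≠ 0
    | 0 => by rw [hA0, mul_neg_one, ← sub_eq_add_neg, sub_ne_zero]; exact hρ0b.symm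
    | m + 1 => one_add_ne_zero_of_norm_lt_one (hρα (m + 1) m)
  have hclosed : ∀ n, C (1 + ρ n * A n) * P n = S n - C (ρ n) * starPoly (S n)
    | 0 => by
      rw [hP0, (hS.monic 0).natDegree_eq_zero.mp (hS.natDegree_eq 0), starPoly_one, hA0,
        mul_one, mul_one, map_add, map_one, map_mul, map_neg, map_one, mul_neg_one, sub_eq_add_neg]
    | m + 1 => by
      rw [hP _ (Nat.le_add_left 1 m), Nat.add_sub_cancel]
      exact C_mul_X_mul_sub_C_mul_starPoly (hszego m) (hszego_star m) (hρ_mul m)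
  refine ⟨fun n => ⟨hden n, ?_⟩, fun n hn => ?_⟩
  · rw [← hclosed, ← mul_assoc, ← map_mul, inv_mul_cancel₀ (hden n), map_one, one_mul]
  obtain ⟨m, rfl⟩ := Nat.exists_eq_add_of_le' hn
  rw [hP _ (by omega), hP _ hn]
  simp only [Nat.add_sub_cancel]
  exact X_mul_sub_C_mul_starPoly_three_term (hszego m) (hszego_star m) (hρ_mul m) (hρ_norm m)
    (hclosed m)
end
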